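/- arXiv:2108.02910 — 6 statements merged into one kernel-verified Lean document; each statement's English description precedes it below -/
import Mathlib

section
/- Let θ ∈ (1/2, 1] and suppose every adjacent step ratio satisfies 0 < r_k ≤ r_p := (2 + 2√(2θ))/(2θ − 1) for 2 ≤ k ≤ n. Then for every real sequence w_1, …, w_n one has ∑_{k=1}^n w_k ∑_{j=1}^k b_{k−j}^{(k)} w_j ≥ 0, i.e., the WSBDF2 convolution kernels are positive semi-definite. -/
/-!
Write `Q_n` for the quadratic form. Since only `b_0^{(k)}` and `b_1^{(k)}` are nonzero,
`Q_{k+1} = Q_k + w_{k+1} (b_0^{(k+1)} w_{k+1} + b_1^{(k+1)} w_k)`, and one shows inductively the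
stronger bound `Q_k ≥ w_k² / τ_k`. With `r = r_{k+1}`, the step
`w_k² / τ_k + w_{k+1} (b_0 w_{k+1} + b_1 w_k) ≥ w_{k+1}² / τ_{k+1}` is, after clearing
denominators, the nonnegativity of the binary quadratic form
`(1 + r) a² - (2θ - 1) r a b + (2θ - 1) b²`, whose discriminant condition
`(2θ - 1) r² ≤ 4 (1 + r)` says exactly that `r` lies below the positive root `r_p`.
-/

open Finset

/-- Adjacent time-step ratios `r_k = τ_k / τ_{k-1}`. -/
noncomputable def rr (τ : ℕ → ℝ) (k : ℕ) : ℝ := τ k / τ (k - 1)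

/-- The WSBDF2 convolution kernels `b_j^{(n)}`:
`b_0^{(1)} = 1/τ_1`, and for `n ≥ 2`,
`b_0^{(n)} = (1 + 2θ r_n)/(τ_n (1 + r_n))`, `b_1^{(n)} = (1 - 2θ) r_n² /(τ_n (1 + r_n))`,
all other kernels vanish. -/
noncomputable def bk (θ : ℝ) (τ : ℕ → ℝ) (n j : ℕ) : ℝ :=
  if n = 1 then (if j = 0 then 1 / τ 1 else 0)
  else if j = 0 then (1 + 2 * θ * rr τ n) / (τ n * (1 + rr τ n))
  else if j = 1 then (1 - 2 * θ) * (rr τ n) ^ 2 / (τ n * (1 + rr τ n))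
  else 0

/-- The DOC (discrete orthogonal convolution) kernels: `dk θ τ n m` is `d_m^{(n)}`,
defined by `d_0^{(n)} = 1/b_0^{(n)}` and
`d_{n-k}^{(n)} = -(b_1^{(k+1)}/b_0^{(k)}) d_{n-k-1}^{(n)}` for `1 ≤ k ≤ n-1`. -/
noncomputable def dk (θ : ℝ) (τ : ℕ → ℝ) (n : ℕ) : ℕ → ℝ
  | 0 => 1 / bk θ τ n 0
  | m + 1 => -(bk θ τ (n - m) 1 / bk θ τ (n - m - 1) 0) * dk θ τ n m

noncomputable def wsbdf2Form (θ : ℝ) (τ w : ℕ → ℝ) (n : ℕ) : ℝ :=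
  ∑ k ∈ Icc 1 n, w k * ∑ j ∈ Icc 1 k, bk θ τ k (k - j) * w j

section Kernels

variable (θ : ℝ) (τ : ℕ → ℝ)

theorem bk_one_zero : bk θ τ 1 0 = 1 / τ 1 := by
  simp [bk]

theorem bk_zero_of_two_le {n : ℕ} (hn : 2 ≤ n) :
    bk θ τ n 0 = (1 + 2 * θ * rr τ n) / (τ n * (1 + rr τ n)) := by
  simp [bk, show n ≠ 1 by omega]

theorem bk_one_of_two_le {n : ℕ} (hn : 2 ≤ n) :
    bk θ τ n 1 = (1 - 2 * θ) * rr τ n ^ 2 / (τ n * (1 + rr τ n)) := by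
  simp [bk, show n ≠ 1 by omega]

theorem bk_eq_zero_of_two_le {n j : ℕ} (hj : 2 ≤ j) : bk θ τ n j = 0 := by
  simp [bk, show j ≠ 0 by omega, show j ≠ 1 by omega]

variable (w : ℕ → ℝ)

theorem wsbdf2Form_one : wsbdf2Form θ τ w 1 = w 1 ^ 2 / τ 1 := by
  simp [wsbdf2Form, bk_one_zero]
  ring

theorem sum_bk_mul_of_two_le {k : ℕ} (hk : 2 ≤ k) :
    ∑ j ∈ Icc 1 k, bk θ τ k (k - j) * w j
      = bk θ τ k 0 * w k + bk θ τ k 1 * w (k - 1) := by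
  obtain ⟨m, rfl⟩ : ∃ m, k = m + 2 := ⟨k - 2, by omega⟩
  have hlow : ∑ j ∈ Icc 1 m, bk θ τ (m + 2) (m + 2 - j) * w j = 0 :=
    sum_eq_zero fun j hj => by
      rw [bk_eq_zero_of_two_le θ τ (by simp only [mem_Icc] at hj; omega), zero_mul]
  rw [sum_Icc_succ_top (by omega : 1 ≤ m + 2), sum_Icc_succ_top (by omega : 1 ≤ m + 1), hlow,
    show m + 2 - (m + 1) = 1 by omega, Nat.sub_self, show m + 2 - 1 = m + 1 by omega]
  ring

theorem wsbdf2Form_succ {k : ℕ} (hk : 1 ≤ k) :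
    wsbdf2Form θ τ w (k + 1) =
      wsbdf2Form θ τ w k
        + w (k + 1) * (bk θ τ (k + 1) 0 * w (k + 1) + bk θ τ (k + 1) 1 * w k) := by
  rw [wsbdf2Form, sum_Icc_succ_top (by omega), sum_bk_mul_of_two_le θ τ w (by omega),
    Nat.add_sub_cancel, wsbdf2Form]

end Kernels

theorem quadratic_form_nonneg {p q s : ℝ} (hp : 0 < p) (hdisc : q ^ 2 ≤ 4 * p * s) (a b : ℝ) :
    0 ≤ p * a ^ 2 + q * a * b + s * b ^ 2 := by
  have hsq : 4 * p * (p * a ^ 2 + q * a * b + s * b ^ 2)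
      = (2 * p * a + q * b) ^ 2 + (4 * p * s - q ^ 2) * b ^ 2 := by
    ring
  have h4 : 0 ≤ 4 * p * (p * a ^ 2 + q * a * b + s * b ^ 2) := by
    rw [hsq]
    have := mul_nonneg (sub_nonneg.2 hdisc) (sq_nonneg b)
    positivity
  exact nonneg_of_mul_nonneg_right h4 (by positivity)

theorem sq_mul_le_of_le_rp {θ r : ℝ} (hθ : 1 / 2 < θ) (hr : 0 < r)
    (hrp : r ≤ (2 + 2 * Real.sqrt (2 * θ)) / (2 * θ - 1)) :
    (2 * θ - 1) * r ^ 2 ≤ 4 * (1 + r) := by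
  set q := Real.sqrt (2 * θ)
  have hq2 : q ^ 2 = 2 * θ := Real.sq_sqrt (by linarith)
  have hq1 : 1 < q := by nlinarith [Real.sqrt_nonneg (2 * θ)]
  -- `2θ - 1 = (q - 1)(q + 1)` and `r_p = 2 / (q - 1)`
  have hrq : (q - 1) * r ≤ 2 := by
    rw [le_div_iff₀ (by linarith)] at hrp
    nlinarith
  nlinarith [mul_le_mul_of_nonneg_right hrq (by positivity : 0 ≤ (q + 1) * r)]

theorem sq_div_le_add_step (θ : ℝ) (τ : ℕ → ℝ) {k : ℕ} (hk : 1 ≤ k) (hθ : 1 / 2 < θ)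
    (hτ : 0 < τ k) (hr : 0 < rr τ (k + 1))
    (hdisc : (2 * θ - 1) * rr τ (k + 1) ^ 2 ≤ 4 * (1 + rr τ (k + 1))) (a b : ℝ) :
    b ^ 2 / τ (k + 1)
      ≤ a ^ 2 / τ k + b * (bk θ τ (k + 1) 0 * b + bk θ τ (k + 1) 1 * a) := by
  rw [bk_zero_of_two_le θ τ (by omega), bk_one_of_two_le θ τ (by omega)]
  set r := rr τ (k + 1)
  have hτ' : τ (k + 1) = r * τ k := by simp only [r, rr, Nat.add_sub_cancel]; field_simp
  have hform : 0 ≤ (1 + r) * a ^ 2 + (1 - 2 * θ) * r * a * b + (2 * θ - 1) * b ^ 2 :=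
    quadratic_form_nonneg (by linarith) (by nlinarith) a b
  rw [hτ', ← sub_nonneg]
  have hdiff : a ^ 2 / τ k + b * ((1 + 2 * θ * r) / (r * τ k * (1 + r)) * b
        + (1 - 2 * θ) * r ^ 2 / (r * τ k * (1 + r)) * a) - b ^ 2 / (r * τ k)
      = ((1 + r) * a ^ 2 + (1 - 2 * θ) * r * a * b + (2 * θ - 1) * b ^ 2) / (τ k * (1 + r)) := by
    field_simp
    ring
  rw [hdiff]
  have : 0 < 1 + r := by linarith
  positivity

theorem sq_div_le_wsbdf2Form (θ : ℝ) (τ w : ℕ → ℝ) {n : ℕ} (hn : 1 ≤ n)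
    (hθ : 1 / 2 < θ)
    (hτ : ∀ k, 1 ≤ k → k ≤ n → 0 < τ k)
    (hr : ∀ k, 2 ≤ k → k ≤ n →
      0 < rr τ k ∧ (2 * θ - 1) * rr τ k ^ 2 ≤ 4 * (1 + rr τ k)) :
    w n ^ 2 / τ n ≤ wsbdf2Form θ τ w n := by
  induction n, hn using Nat.le_induction with
  | base => rw [wsbdf2Form_one]
  | succ k hk ih =>
    obtain ⟨hr0, hdisc⟩ := hr (k + 1) (by omega) le_rfl
    have hτk := hτ k hk (by omega)
    have hQk := ih (fun j hj hjk => hτ j hj (by omega)) (fun j hj hjk => hr j hj (by omega))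
    rw [wsbdf2Form_succ θ τ w hk]
    linarith [sq_div_le_add_step θ τ hk hθ hτk hr0 hdisc (w k) (w (k + 1))]

theorem wsbdf2_kernels_psd_of_ratio_le_rp_general
    (θ : ℝ) (hθ : 1 / 2 < θ ∧ θ ≤ 1)
    (N : ℕ)
    (τ : ℕ → ℝ) (hτ : ∀ k, 1 ≤ k → k ≤ N → 0 < τ k)
    (n : ℕ) (hn : 1 ≤ n) (hnN : n ≤ N)
    (hr : ∀ k, 2 ≤ k → k ≤ n →
      0 < rr τ k ∧ rr τ k ≤ (2 + 2 * Real.sqrt (2 * θ)) / (2 * θ - 1))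
    (w : ℕ → ℝ) :
    0 ≤ ∑ k ∈ Finset.Icc 1 n, w k * ∑ j ∈ Finset.Icc 1 k, bk θ τ k (k - j) * w j := by
  have hτn : ∀ k, 1 ≤ k → k ≤ n → 0 < τ k := fun k hk hkn => hτ k hk (hkn.trans hnN)
  have hdisc : ∀ k, 2 ≤ k → k ≤ n →
      0 < rr τ k ∧ (2 * θ - 1) * rr τ k ^ 2 ≤ 4 * (1 + rr τ k) := fun k hk hkn =>
    ⟨(hr k hk hkn).1, sq_mul_le_of_le_rp hθ.1 (hr k hk hkn).1 (hr k hk hkn).2⟩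
  have hlower := sq_div_le_wsbdf2Form θ τ w hn hθ.1 hτn hdisc
  exact (div_nonneg (sq_nonneg _) (hτn n hn le_rfl).le).trans hlower

/-- For `θ ∈ (1/2, 1]`, if every adjacent step ratio satisfies
`0 < r_k ≤ r_p = (2 + 2√(2θ))/(2θ − 1)` for `2 ≤ k ≤ n`, then the WSBDF2 convolution
kernels are positive semi-definite:
`∑_{k=1}^n w_k ∑_{j=1}^k b_{k−j}^{(k)} w_j ≥ 0` for every real sequence `w`. -/
theorem wsbdf2_kernels_psd_of_ratio_le_rp
    (θ : ℝ) (hθ : 1 / 2 < θ ∧ θ ≤ 1)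
    (N : ℕ) (hN : 1 ≤ N)
    (τ : ℕ → ℝ) (hτ : ∀ k, 1 ≤ k → k ≤ N → 0 < τ k)
    (n : ℕ) (hn : 1 ≤ n) (hnN : n ≤ N)
    (hr : ∀ k, 2 ≤ k → k ≤ n →
      0 < rr τ k ∧ rr τ k ≤ (2 + 2 * Real.sqrt (2 * θ)) / (2 * θ - 1))
    (w : ℕ → ℝ) :
    0 ≤ ∑ k ∈ Finset.Icc 1 n, w k * ∑ j ∈ Finset.Icc 1 k, bk θ τ k (k - j) * w j :=
  wsbdf2_kernels_psd_of_ratio_le_rp_general θ hθ N τ hτ n hn hnN hr w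
end

section
/- Let θ ∈ (1/2, 1] and let r_s = r_s(θ) be the unique positive root of (1 − 2θ)² r³ − 4θ² r² − 4θ r − 1 = 0. Then for all real x, y with 0 ≤ x ≤ r_s and 0 ≤ y ≤ r_s, one has (2(1 + 2θ x) + (1 − 2θ) x^{3/2})/(1 + x) ≥ (2θ − 1) y^{3/2}/(1 + y). -/
/-!
Put `a = 2θ - 1` and `s = √r_s`. The cubic says `(a s³)² = (1 + 2θ s²)²`, so `a s³ = 1 + 2θ s²`.
With `t = √x` and `u = √y` both sides become rational functions of `t` and `u`. The left-hand side
`a u³ / (1 + u²)` is increasing in `u`, so it is at most `a s³ / (1 + s²)`. By the identity this is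
the right-hand side `(2 (1 + 2θ t²) - a t³) / (1 + t²)` at `t = s`, and the right-hand side does not
increase from `t` to `s` because `θ ≤ 1` forces `s ≥ 2`.
-/

open Real

theorem rpow_three_halves_eq_sqrt_pow {x : ℝ} (hx : 0 ≤ x) : x ^ ((3 : ℝ) / 2) = √x ^ 3 := by
  rw [sqrt_eq_rpow, ← rpow_natCast, ← rpow_mul hx]
  norm_num

theorem monotone_pow_three_div_one_add_sq : Monotone (fun u : ℝ => u ^ 3 / (1 + u ^ 2)) := by
  intro u s hus
  rw [div_le_div_iff₀ (by positivity) (by positivity)]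
  have hsum : 0 ≤ (s + u) ^ 2 + s ^ 2 + u ^ 2 := by positivity
  nlinarith [mul_nonneg (sub_nonneg.2 hus) hsum,
    mul_nonneg (sub_nonneg.2 hus) (mul_nonneg (sq_nonneg s) (sq_nonneg u))]

section Cubic

variable {θ : ℝ}

theorem nonneg_of_cubic_eq_zero {r : ℝ} (hθ : 2 * θ ≠ 1)
    (hr : (1 - 2 * θ) ^ 2 * r ^ 3 - 4 * θ ^ 2 * r ^ 2 - 4 * θ * r - 1 = 0) : 0 ≤ r := by
  have hcube : (1 - 2 * θ) ^ 2 * r ^ 3 = (1 + 2 * θ * r) ^ 2 := by linear_combination hr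
  have hcoeff : 0 < (1 - 2 * θ) ^ 2 := by
    have : 1 - 2 * θ ≠ 0 := fun h => hθ (by linarith)
    positivity
  have hr3 : 0 ≤ r ^ 3 := nonneg_of_mul_nonneg_right (hcube ▸ sq_nonneg _) hcoeff
  exact (Odd.pow_nonneg_iff (by decide)).1 hr3

theorem mul_sqrt_pow_three_eq_of_cubic_eq_zero {r : ℝ} (hθ : 1 / 2 < θ)
    (hr : (1 - 2 * θ) ^ 2 * r ^ 3 - 4 * θ ^ 2 * r ^ 2 - 4 * θ * r - 1 = 0) :
    (2 * θ - 1) * √r ^ 3 = 1 + 2 * θ * √r ^ 2 := by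
  have hr0 : 0 ≤ r := nonneg_of_cubic_eq_zero (by linarith) hr
  have ha : 0 ≤ 2 * θ - 1 := by linarith
  refine (sq_eq_sq₀ (by positivity) (by positivity)).1 ?_
  rw [mul_pow, ← pow_mul, show 3 * 2 = 2 * 3 from rfl, pow_mul, sq_sqrt hr0]
  linear_combination hr

theorem two_le_of_mul_pow_three_eq {s : ℝ} (hθ : 1 / 2 < θ ∧ θ ≤ 1)
    (hs : (2 * θ - 1) * s ^ 3 = 1 + 2 * θ * s ^ 2) : 2 ≤ s := by
  have hsplit : (2 * θ - 1) * (s ^ 3 - s ^ 2) = 1 + s ^ 2 := by linear_combination hs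
  have hpos : 0 < s ^ 3 - s ^ 2 :=
    pos_of_mul_pos_right (hsplit ▸ by positivity) (by linarith : 0 ≤ 2 * θ - 1)
  nlinarith [mul_nonneg (by linarith : 0 ≤ 1 - θ) hpos.le]

theorem div_one_add_sq_le_of_two_le {s t : ℝ} (hθ : 1 / 2 ≤ θ) (ht : 0 ≤ t) (hts : t ≤ s)
    (hs : 2 ≤ s) :
    (2 * (1 + 2 * θ * s ^ 2) + (1 - 2 * θ) * s ^ 3) / (1 + s ^ 2) ≤
      (2 * (1 + 2 * θ * t ^ 2) + (1 - 2 * θ) * t ^ 3) / (1 + t ^ 2) := by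
  rw [div_le_div_iff₀ (by positivity) (by positivity)]
  have hgap : 0 ≤ s ^ 2 + s * t + t ^ 2 + s ^ 2 * t ^ 2 - 2 * s - 2 * t := by nlinarith
  nlinarith [mul_nonneg (mul_nonneg (by linarith : 0 ≤ 2 * θ - 1) (sub_nonneg.2 hts)) hgap]

end Cubic

theorem h_nonneg_on_square_general
    (θ : ℝ) (hθ : 1 / 2 < θ ∧ θ ≤ 1)
    (rs : ℝ)
    (hrs_root : (1 - 2 * θ) ^ 2 * rs ^ 3 - 4 * θ ^ 2 * rs ^ 2 - 4 * θ * rs - 1 = 0)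
    (x y : ℝ) (hx0 : 0 ≤ x) (hxs : x ≤ rs) (hy0 : 0 ≤ y) (hys : y ≤ rs) :
    (2 * θ - 1) * y ^ ((3 : ℝ) / 2) / (1 + y) ≤
      (2 * (1 + 2 * θ * x) + (1 - 2 * θ) * x ^ ((3 : ℝ) / 2)) / (1 + x) := by
  have hkey := mul_sqrt_pow_three_eq_of_cubic_eq_zero hθ.1 hrs_root
  have hs2 : 2 ≤ √rs := two_le_of_mul_pow_three_eq hθ hkey
  rw [rpow_three_halves_eq_sqrt_pow hx0, rpow_three_halves_eq_sqrt_pow hy0]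
  calc (2 * θ - 1) * √y ^ 3 / (1 + y)
      = (2 * θ - 1) * (√y ^ 3 / (1 + √y ^ 2)) := by rw [sq_sqrt hy0, mul_div_assoc]
    _ ≤ (2 * θ - 1) * (√rs ^ 3 / (1 + √rs ^ 2)) :=
        mul_le_mul_of_nonneg_left (monotone_pow_three_div_one_add_sq (sqrt_le_sqrt hys))
          (by linarith [hθ.1])
    _ = (2 * (1 + 2 * θ * √rs ^ 2) + (1 - 2 * θ) * √rs ^ 3) / (1 + √rs ^ 2) := by
        rw [← mul_div_assoc, ← hkey]
        ring
    _ ≤ (2 * (1 + 2 * θ * √x ^ 2) + (1 - 2 * θ) * √x ^ 3) / (1 + √x ^ 2) :=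
        div_one_add_sq_le_of_two_le hθ.1.le (sqrt_nonneg x) (sqrt_le_sqrt hxs) hs2
    _ = (2 * (1 + 2 * θ * x) + (1 - 2 * θ) * √x ^ 3) / (1 + x) := by rw [sq_sqrt hx0]

/-- Let `θ ∈ (1/2, 1]` and let `r_s` be the unique positive root of
`(1 − 2θ)² r³ − 4θ² r² − 4θ r − 1 = 0`. Then for all `0 ≤ x ≤ r_s` and `0 ≤ y ≤ r_s`,
`(2(1 + 2θ x) + (1 − 2θ) x^{3/2})/(1 + x) ≥ (2θ − 1) y^{3/2}/(1 + y)`. -/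
theorem h_nonneg_on_square
    (θ : ℝ) (hθ : 1 / 2 < θ ∧ θ ≤ 1)
    (rs : ℝ) (hrs_pos : 0 < rs)
    (hrs_root : (1 - 2 * θ) ^ 2 * rs ^ 3 - 4 * θ ^ 2 * rs ^ 2 - 4 * θ * rs - 1 = 0)
    (hrs_uniq : ∀ r : ℝ, 0 < r →
      (1 - 2 * θ) ^ 2 * r ^ 3 - 4 * θ ^ 2 * r ^ 2 - 4 * θ * r - 1 = 0 → r = rs)
    (x y : ℝ) (hx0 : 0 ≤ x) (hxs : x ≤ rs) (hy0 : 0 ≤ y) (hys : y ≤ rs) :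
    (2 * θ - 1) * y ^ ((3 : ℝ) / 2) / (1 + y) ≤
      (2 * (1 + 2 * θ * x) + (1 - 2 * θ) * x ^ ((3 : ℝ) / 2)) / (1 + x) :=
  h_nonneg_on_square_general θ hθ rs hrs_root x y hx0 hxs hy0 hys
end

section
/- Let θ ∈ (1/2, 1], let k ≥ 2, and let τ_{k−1}, τ_k, τ_{k+1} > 0 with ratios r_k := τ_k/τ_{k−1} and r_{k+1} := τ_{k+1}/τ_k satisfying 0 < r_k ≤ r_s and 0 < r_{k+1} ≤ r_s. Then for all real numbers ω_{k−1}, ω_k: 2 ω_k (b_0^{(k)} ω_k + b_1^{(k)} ω_{k−1}) ≥ ((2θ − 1) r_{k+1}^{3/2}/(1 + r_{k+1})) · ω_k²/τ_k − ((2θ − 1) r_k^{3/2}/(1 + r_k)) · ω_{k−1}²/τ_{k−1}, where b_0^{(k)} = (1 + 2θ r_k)/(τ_k(1 + r_k)) and b_1^{(k)} = (1 − 2θ) r_k²/(τ_k(1 + r_k)). -/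
/-!
After multiplying by `τ_k (1 + r_k)` and writing `ω_{k-1}² / τ_{k-1} = r_k ω_{k-1}² / τ_k`, the
difference of the two sides is `(2θ - 1) r_k √r_k (ω_k - √r_k ω_{k-1})² + E ω_k²` with
`E = 2 (1 + 2θ r_k) - (2θ - 1) (1 + r_k) r_{k+1}^{3/2} / (1 + r_{k+1}) - (2θ - 1) r_k^{3/2}`,
so it suffices that `E ≥ 0`. Since `x ↦ x √x / (1 + x)` is increasing, the `r_{k+1}`-term of `E`
is worst at `r_{k+1} = r_s`, where the cubic gives `(2θ - 1) r_s √r_s = 2θ r_s + 1`. After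
bounding `√r_k ≤ √r_s`, what remains is affine in `r_k`, vanishes at `r_k = r_s`, and is
nonnegative at `r_k = 0` because `θ ≤ 1`.
-/

open Real

lemma rpow_three_halves {x : ℝ} (hx : 0 ≤ x) : x ^ ((3 : ℝ) / 2) = x * √x := by
  rw [show (3 : ℝ) / 2 = 1 + 1 / 2 by norm_num, rpow_add' hx (by norm_num), rpow_one,
    sqrt_eq_rpow]

lemma mul_sqrt_div_one_add_le {x y : ℝ} (hx : 0 ≤ x) (hxy : x ≤ y) :
    x * √x / (1 + x) ≤ y * √y / (1 + y) := by
  have hsqrt : √x ≤ √y := sqrt_le_sqrt hxy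
  have hcube : x * √x ≤ y * √y := mul_le_mul hxy hsqrt (sqrt_nonneg x) (by linarith)
  rw [div_le_div_iff₀ (by linarith) (by linarith)]
  nlinarith [mul_le_mul_of_nonneg_left hsqrt (mul_nonneg hx (hx.trans hxy))]

lemma mul_sqrt_eq_of_wsbdf2_root {θ ρ : ℝ} (hθ : 1 / 2 ≤ θ) (hρ : 0 ≤ ρ)
    (hroot : (1 - 2 * θ) ^ 2 * ρ ^ 3 - 4 * θ ^ 2 * ρ ^ 2 - 4 * θ * ρ - 1 = 0) :
    (2 * θ - 1) * ρ * √ρ = 2 * θ * ρ + 1 := by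
  have hκ : 0 ≤ 2 * θ - 1 := by linarith
  refine (sq_eq_sq₀ (by positivity) (by positivity)).1 ?_
  linear_combination ((2 * θ - 1) ^ 2 * ρ ^ 2) * sq_sqrt hρ + hroot

lemma wsbdf2_coeff_bound {θ ρ r s : ℝ} (hθ : 1 / 2 ≤ θ ∧ θ ≤ 1) (hρ : 0 < ρ)
    (hroot : (1 - 2 * θ) ^ 2 * ρ ^ 3 - 4 * θ ^ 2 * ρ ^ 2 - 4 * θ * ρ - 1 = 0)
    (hr : 0 ≤ r) (hrρ : r ≤ ρ) (hs : 0 ≤ s) (hsρ : s ≤ ρ) :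
    (2 * θ - 1) * (s * √s) / (1 + s) * (1 + r) + (2 * θ - 1) * (r * √r) ≤
      2 * (1 + 2 * θ * r) := by
  obtain ⟨hθ₁, hθ₂⟩ := hθ
  have hκ : 0 ≤ 2 * θ - 1 := by linarith
  have hρ_root := mul_sqrt_eq_of_wsbdf2_root hθ₁ hρ.le hroot
  have hs_worst : (2 * θ - 1) * (s * √s) / (1 + s) ≤ (2 * θ * ρ + 1) / (1 + ρ) :=
    calc (2 * θ - 1) * (s * √s) / (1 + s) = (2 * θ - 1) * (s * √s / (1 + s)) := mul_div_assoc ..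
      _ ≤ (2 * θ - 1) * (ρ * √ρ / (1 + ρ)) :=
        mul_le_mul_of_nonneg_left (mul_sqrt_div_one_add_le hs hsρ) hκ
      _ = (2 * θ * ρ + 1) / (1 + ρ) := by rw [← hρ_root]; ring
  have hr_sqrt : (2 * θ - 1) * (r * √r) ≤ (2 * θ - 1) * r * √ρ := by
    rw [← mul_assoc]
    exact mul_le_mul_of_nonneg_left (sqrt_le_sqrt hrρ) (mul_nonneg hκ hr)
  have haffine : ((2 * θ * ρ + 1) / (1 + ρ) * (1 + r) + (2 * θ - 1) * r * √ρ) * (ρ * (1 + ρ)) =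
      2 * (1 + 2 * θ * r) * (ρ * (1 + ρ)) - (ρ - r) * (1 + 2 * ρ - 2 * θ * ρ) := by
    field_simp
    linear_combination (r * (1 + ρ)) * hρ_root
  have hgap : 0 ≤ (ρ - r) * (1 + 2 * ρ - 2 * θ * ρ) :=
    mul_nonneg (by linarith) (by nlinarith)
  have hbound : (2 * θ * ρ + 1) / (1 + ρ) * (1 + r) + (2 * θ - 1) * r * √ρ ≤
      2 * (1 + 2 * θ * r) :=
    le_of_mul_le_mul_right (by linarith) (by positivity : 0 < ρ * (1 + ρ))
  nlinarith [mul_le_mul_of_nonneg_right hs_worst (by linarith : (0 : ℝ) ≤ 1 + r)]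

lemma wsbdf2_energy_bound {θ r τ D ω₀ ω₁ : ℝ} (hθ : 1 / 2 ≤ θ) (hr : 0 ≤ r) (hτ : 0 < τ)
    (hD : D * (1 + r) + (2 * θ - 1) * (r * √r) ≤ 2 * (1 + 2 * θ * r)) :
    D * (ω₁ ^ 2 / τ) - (2 * θ - 1) * (r * √r) / (1 + r) * (r * ω₀ ^ 2 / τ) ≤
      2 * ω₁ * ((1 + 2 * θ * r) / (τ * (1 + r)) * ω₁ +
        (1 - 2 * θ) * r ^ 2 / (τ * (1 + r)) * ω₀) := by
  obtain ⟨a, ha, rfl⟩ : ∃ a ≥ 0, a ^ 2 = r := ⟨√r, sqrt_nonneg r, sq_sqrt hr⟩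
  rw [sqrt_sq ha] at hD ⊢
  have hsos : 2 * ω₁ * ((1 + 2 * θ * a ^ 2) / (τ * (1 + a ^ 2)) * ω₁ +
        (1 - 2 * θ) * (a ^ 2) ^ 2 / (τ * (1 + a ^ 2)) * ω₀) -
      (D * (ω₁ ^ 2 / τ) - (2 * θ - 1) * (a ^ 2 * a) / (1 + a ^ 2) * (a ^ 2 * ω₀ ^ 2 / τ)) =
      ((2 * θ - 1) * a ^ 3 * (ω₁ - a * ω₀) ^ 2 +
        (2 * (1 + 2 * θ * a ^ 2) - D * (1 + a ^ 2) - (2 * θ - 1) * (a ^ 2 * a)) * ω₁ ^ 2) /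
        (τ * (1 + a ^ 2)) := by
    field_simp
    ring
  rw [← sub_nonneg, hsos]
  have hκ : 0 ≤ 2 * θ - 1 := by linarith
  exact div_nonneg (add_nonneg (by positivity) (mul_nonneg (by linarith) (sq_nonneg ω₁)))
    (by positivity)

theorem wsbdf2_local_lower_bound_general
    (θ : ℝ) (hθ : 1 / 2 < θ ∧ θ ≤ 1)
    (rs : ℝ) (hrs_pos : 0 < rs)
    (hrs_root : (1 - 2 * θ) ^ 2 * rs ^ 3 - 4 * θ ^ 2 * rs ^ 2 - 4 * θ * rs - 1 = 0)
    (τkm1 τk τkp1 : ℝ) (hτkm1 : 0 < τkm1) (hτk : 0 < τk) (hτkp1 : 0 < τkp1)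
    (hrk : τk / τkm1 ≤ rs) (hrkp1 : τkp1 / τk ≤ rs)
    (ωkm1 ωk : ℝ) :
    (2 * θ - 1) * (τkp1 / τk) ^ ((3 : ℝ) / 2) / (1 + τkp1 / τk) * (ωk ^ 2 / τk) -
      (2 * θ - 1) * (τk / τkm1) ^ ((3 : ℝ) / 2) / (1 + τk / τkm1) * (ωkm1 ^ 2 / τkm1) ≤
    2 * ωk * ((1 + 2 * θ * (τk / τkm1)) / (τk * (1 + τk / τkm1)) * ωk +
      (1 - 2 * θ) * (τk / τkm1) ^ 2 / (τk * (1 + τk / τkm1)) * ωkm1) := by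
  have hθ' : 1 / 2 ≤ θ ∧ θ ≤ 1 := ⟨hθ.1.le, hθ.2⟩
  have hr : 0 < τk / τkm1 := div_pos hτk hτkm1
  have hs : 0 < τkp1 / τk := div_pos hτkp1 hτk
  have hω : ωkm1 ^ 2 / τkm1 = τk / τkm1 * ωkm1 ^ 2 / τk := by field_simp
  rw [rpow_three_halves hs.le, rpow_three_halves hr.le, hω]
  exact wsbdf2_energy_bound hθ'.1 hr.le hτk
    (wsbdf2_coeff_bound hθ' hrs_pos hrs_root hr.le hrk hs.le hrkp1)

/-- Let `θ ∈ (1/2, 1]` and `τ_{k−1}, τ_k, τ_{k+1} > 0` with ratios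
`r_k = τ_k/τ_{k−1}` and `r_{k+1} = τ_{k+1}/τ_k` both in `(0, r_s]`, where `r_s` is the
unique positive root of `(1 − 2θ)² r³ − 4θ² r² − 4θ r − 1 = 0`. Then for all reals
`ω_{k−1}, ω_k`:
`2 ω_k (b_0^{(k)} ω_k + b_1^{(k)} ω_{k−1}) ≥
 ((2θ−1) r_{k+1}^{3/2}/(1+r_{k+1})) ω_k²/τ_k − ((2θ−1) r_k^{3/2}/(1+r_k)) ω_{k−1}²/τ_{k−1}`,
with `b_0^{(k)} = (1 + 2θ r_k)/(τ_k(1 + r_k))`, `b_1^{(k)} = (1 − 2θ) r_k²/(τ_k(1 + r_k))`. -/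
theorem wsbdf2_local_lower_bound
    (θ : ℝ) (hθ : 1 / 2 < θ ∧ θ ≤ 1)
    (rs : ℝ) (hrs_pos : 0 < rs)
    (hrs_root : (1 - 2 * θ) ^ 2 * rs ^ 3 - 4 * θ ^ 2 * rs ^ 2 - 4 * θ * rs - 1 = 0)
    (hrs_uniq : ∀ r : ℝ, 0 < r →
      (1 - 2 * θ) ^ 2 * r ^ 3 - 4 * θ ^ 2 * r ^ 2 - 4 * θ * r - 1 = 0 → r = rs)
    (τkm1 τk τkp1 : ℝ) (hτkm1 : 0 < τkm1) (hτk : 0 < τk) (hτkp1 : 0 < τkp1)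
    (hrk : τk / τkm1 ≤ rs) (hrkp1 : τkp1 / τk ≤ rs)
    (ωkm1 ωk : ℝ) :
    (2 * θ - 1) * (τkp1 / τk) ^ ((3 : ℝ) / 2) / (1 + τkp1 / τk) * (ωk ^ 2 / τk) -
      (2 * θ - 1) * (τk / τkm1) ^ ((3 : ℝ) / 2) / (1 + τk / τkm1) * (ωkm1 ^ 2 / τkm1) ≤
    2 * ωk * ((1 + 2 * θ * (τk / τkm1)) / (τk * (1 + τk / τkm1)) * ωk +
      (1 - 2 * θ) * (τk / τkm1) ^ 2 / (τk * (1 + τk / τkm1)) * ωkm1) :=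
  wsbdf2_local_lower_bound_general θ hθ rs hrs_pos hrs_root τkm1 τk τkp1 hτkm1 hτk hτkp1 hrk hrkp1
    ωkm1 ωk
end

section
/- For all 1 ≤ k ≤ n ≤ N, the DOC kernels have the explicit formula d_{n−k}^{(n)} = (1/b_0^{(k)}) · ∏_{i=k+1}^n (2θ − 1) r_i² / (1 + 2θ r_i) (the empty product for k = n being 1). -/
open Finset

/-!
The recursion for `d^{(n)}` telescopes: shifting each denominator `b_0^{(i-1)}` one factor to the
left turns `d_{n-k}^{(n)}` into `(1/b_0^{(k)}) ∏_{i=k+1}^n (-b_1^{(i)}/b_0^{(i)})`, a purely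
formal rearrangement. In each ratio `-b_1^{(i)}/b_0^{(i)}` the common factor `τ_i (1 + r_i)`
cancels.
-/

lemma dk_sub_of_lt (θ : ℝ) (τ : ℕ → ℝ) {n k : ℕ} (hkn : k < n) :
    dk θ τ n (n - k) = -(bk θ τ (k + 1) 1 / bk θ τ k 0) * dk θ τ n (n - (k + 1)) := by
  obtain ⟨m, rfl⟩ := Nat.exists_eq_add_of_lt hkn
  rw [show k + m + 1 - k = m + 1 by omega, show k + m + 1 - (k + 1) = m by omega, dk,
    show k + m + 1 - m = k + 1 by omega, Nat.add_sub_cancel]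

theorem dk_sub_eq_prod (θ : ℝ) (τ : ℕ → ℝ) {n k : ℕ} (hkn : k ≤ n) :
    dk θ τ n (n - k) = 1 / bk θ τ k 0 * ∏ i ∈ Icc (k + 1) n, -bk θ τ i 1 / bk θ τ i 0 := by
  induction hkn using Nat.decreasingInduction with
  | self => simp [dk]
  | of_succ k hkn ih =>
    rw [dk_sub_of_lt θ τ hkn, ih, ← insert_Icc_add_one_left_eq_Icc (Nat.succ_le_of_lt hkn),
      prod_insert (by simp)]
    ring

lemma bk_zero_of_ne_one (θ : ℝ) (τ : ℕ → ℝ) {n : ℕ} (hn : n ≠ 1) :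
    bk θ τ n 0 = (1 + 2 * θ * rr τ n) / (τ n * (1 + rr τ n)) := by
  simp [bk, hn]

lemma bk_one_of_ne_one (θ : ℝ) (τ : ℕ → ℝ) {n : ℕ} (hn : n ≠ 1) :
    bk θ τ n 1 = (1 - 2 * θ) * rr τ n ^ 2 / (τ n * (1 + rr τ n)) := by
  simp [bk, hn]

lemma neg_bk_one_div_bk_zero (θ : ℝ) (τ : ℕ → ℝ) {n : ℕ} (hn : n ≠ 1) (hτ : τ n ≠ 0)
    (hr : 1 + rr τ n ≠ 0) :
    -bk θ τ n 1 / bk θ τ n 0 = (2 * θ - 1) * rr τ n ^ 2 / (1 + 2 * θ * rr τ n) := by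
  rw [bk_zero_of_ne_one θ τ hn, bk_one_of_ne_one θ τ hn, ← neg_div,
    div_div_div_cancel_right₀ (mul_ne_zero hτ hr)]
  ring

theorem doc_kernels_explicit_formula_general
    (θ : ℝ)
    (N : ℕ)
    (τ : ℕ → ℝ) (hτ : ∀ k, 1 ≤ k → k ≤ N → 0 < τ k)
    (n : ℕ) (hnN : n ≤ N)
    (k : ℕ) (hk : 1 ≤ k) (hkn : k ≤ n) :
    dk θ τ n (n - k) = (1 / bk θ τ k 0) *
      ∏ i ∈ Finset.Icc (k + 1) n, (2 * θ - 1) * (rr τ i) ^ 2 / (1 + 2 * θ * rr τ i) := by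
  rw [dk_sub_eq_prod θ τ hkn]
  congr 1
  refine prod_congr rfl fun i hi => ?_
  obtain ⟨hki, hin⟩ := mem_Icc.mp hi
  have hτi : 0 < τ i := hτ i (by omega) (by omega)
  have hr : 0 < rr τ i := div_pos hτi (hτ (i - 1) (by omega) (by omega))
  exact neg_bk_one_div_bk_zero θ τ (by omega) hτi.ne' (by positivity)

/-- For all `1 ≤ k ≤ n ≤ N`, the DOC kernels have the explicit formula
`d_{n−k}^{(n)} = (1/b_0^{(k)}) · ∏_{i=k+1}^n (2θ − 1) r_i² / (1 + 2θ r_i)`. -/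
theorem doc_kernels_explicit_formula
    (θ : ℝ) (hθ : 1 / 2 ≤ θ ∧ θ ≤ 1)
    (N : ℕ) (hN : 1 ≤ N)
    (τ : ℕ → ℝ) (hτ : ∀ k, 1 ≤ k → k ≤ N → 0 < τ k)
    (n : ℕ) (hn : 1 ≤ n) (hnN : n ≤ N)
    (k : ℕ) (hk : 1 ≤ k) (hkn : k ≤ n) :
    dk θ τ n (n - k) = (1 / bk θ τ k 0) *
      ∏ i ∈ Finset.Icc (k + 1) n, (2 * θ - 1) * (rr τ i) ^ 2 / (1 + 2 * θ * rr τ i) :=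
  doc_kernels_explicit_formula_general θ N τ hτ n hnN k hk hkn
end

section
/- Let θ ∈ (1/2, 1] and suppose all ratios r_2, …, r_{N+1} satisfy 0 < r_k ≤ r_s, where r_s is the unique positive root of (1 − 2θ)² r³ − 4θ² r² − 4θ r − 1 = 0. Define the discrete energies E^0 := ⟨A u^0, u^0⟩ and, for k ≥ 1, E^k := ((2θ − 1) r_{k+1}^{3/2}/(1 + r_{k+1})) · τ_k · ‖(u^k − u^{k−1})/τ_k‖² + ⟨A u^k, u^k⟩. Then the WSBDF2 solution satisfies the discrete energy dissipation law (E^k − E^{k−1})/τ_k ≤ 2 ⟨θ f^k + (1 − θ) f^{k−1}, (u^k − u^{k−1})/τ_k⟩ for every 1 ≤ k ≤ N. In particular, if f^k = 0 for all k, then E^k ≤ E^{k−1} for all k ≥ 1. -/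
/-!
Test the step-`n` scheme with `δₙ = uⁿ - uⁿ⁻¹`. For selfadjoint `A`,
`2⟪A(θx + (1-θ)y), x - y⟫ = ⟪Ax, x⟫ - ⟪Ay, y⟫ + (2θ-1)⟪A(x-y), x-y⟫`, so for `θ ≥ 1/2` and `A ≥ 0`
the operator part telescopes up to a dissipative remainder. After Cauchy–Schwarz on the
`b₁` term, the kinetic part is a quadratic form in `(‖δₙ‖, ‖δₙ₋₁‖)` whose nonnegativity is a scalar
inequality in `p = √rₙ`, `q = √rₙ₊₁`. The energy weight `s³/(1+s²)` is increasing, so the worst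
case is `q = √r_s =: t`; there the inequality factors because `t` solves
`(2θ-1)t³ = 2θt² + 1`, which also forces `t > 2`. The first step is the case `rₙ = 0`.
-/

open Finset

open scoped RealInnerProductSpace

theorem LinearMap.IsSymmetric.two_mul_inner_smul_add_smul_sub {H : Type*}
    [NormedAddCommGroup H] [InnerProductSpace ℝ H] {T : H →ₗ[ℝ] H} (hT : T.IsSymmetric)
    (θ : ℝ) (x y : H) :
    2 * ⟪T (θ • x + (1 - θ) • y), x - y⟫ =
      ⟪T x, x⟫ - ⟪T y, y⟫ + (2 * θ - 1) * ⟪T (x - y), x - y⟫ := by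
  have hxy : ⟪T x, y⟫ = ⟪T y, x⟫ := by rw [hT x y, real_inner_comm]
  simp only [map_add, map_smul, map_sub, inner_add_left, inner_sub_left, inner_sub_right,
    real_inner_smul_left]
  linarith

theorem mul_norm_inv_smul_sq {H : Type*} [NormedAddCommGroup H] [NormedSpace ℝ H]
    (τ : ℝ) (v : H) : τ * ‖τ⁻¹ • v‖ ^ 2 = ‖v‖ ^ 2 / τ := by
  rcases eq_or_ne τ 0 with rfl | hτ
  · simp
  · rw [norm_smul, mul_pow, norm_inv, Real.norm_eq_abs, inv_pow, sq_abs]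
    field_simp

theorem sqrt_root_of_cubic_root {θ rs : ℝ} (hθ : 1 / 2 < θ) (hrs : 0 ≤ rs)
    (hroot : (1 - 2 * θ) ^ 2 * rs ^ 3 - 4 * θ ^ 2 * rs ^ 2 - 4 * θ * rs - 1 = 0) :
    (2 * θ - 1) * √rs ^ 3 = 2 * θ * √rs ^ 2 + 1 := by
  have hsq : √rs ^ 2 = rs := Real.sq_sqrt hrs
  have ha : 0 ≤ 2 * θ - 1 := by linarith
  refine (pow_left_inj₀ (by positivity) (by positivity) two_ne_zero).1 ?_
  calc ((2 * θ - 1) * √rs ^ 3) ^ 2 = (1 - 2 * θ) ^ 2 * (√rs ^ 2) ^ 3 := by ring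
    _ = (2 * θ * √rs ^ 2 + 1) ^ 2 := by rw [hsq]; linear_combination hroot

theorem two_lt_of_cubic {θ t : ℝ} (hθ : 1 / 2 < θ) (hθ1 : θ ≤ 1)
    (ht : (2 * θ - 1) * t ^ 3 = 2 * θ * t ^ 2 + 1) : 2 < t := by
  by_contra! h
  nlinarith [sq_nonneg t, mul_nonneg (sub_nonneg.2 h) (sq_nonneg t),
    mul_nonneg (sub_nonneg.2 hθ1) (sq_nonneg t)]

theorem monotoneOn_cube_div_one_add_sq :
    MonotoneOn (fun s : ℝ => s ^ 3 / (1 + s ^ 2)) (Set.Ici 0) := by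
  intro q (hq : 0 ≤ q) t (ht : 0 ≤ t) hqt
  rw [div_le_div_iff₀ (by positivity) (by positivity)]
  nlinarith [mul_nonneg (sub_nonneg.2 hqt) (add_nonneg (add_nonneg (add_nonneg (sq_nonneg t)
    (mul_nonneg ht hq)) (sq_nonneg q)) (sq_nonneg (q * t)))]

theorem cube_div_add_cube_div_le {θ p q t : ℝ} (hθ : 1 / 2 < θ) (hθ1 : θ ≤ 1)
    (ht : (2 * θ - 1) * t ^ 3 = 2 * θ * t ^ 2 + 1)
    (hp : 0 ≤ p) (hpt : p ≤ t) (hq : 0 ≤ q) (hqt : q ≤ t) :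
    (2 * θ - 1) * (p ^ 3 / (1 + p ^ 2)) + (2 * θ - 1) * (q ^ 3 / (1 + q ^ 2)) ≤
      2 * (1 + 2 * θ * p ^ 2) / (1 + p ^ 2) := by
  have ht2 : 2 < t := two_lt_of_cubic hθ hθ1 ht
  have hqt' : (2 * θ - 1) * (q ^ 3 / (1 + q ^ 2)) ≤ (2 * θ - 1) * (t ^ 3 / (1 + t ^ 2)) :=
    mul_le_mul_of_nonneg_left (monotoneOn_cube_div_one_add_sq hq (hq.trans hqt) hqt)
      (by linarith)
  -- at `q = t` the claim factors, because `t` is a root of the cubic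
  have hkey : (2 * θ - 1) * p ^ 3 * (1 + t ^ 2) + (2 * θ - 1) * t ^ 3 * (1 + p ^ 2) ≤
      2 * (1 + 2 * θ * p ^ 2) * (1 + t ^ 2) := by
    have hθ' : 0 ≤ 2 * θ - 1 := by linarith
    have ht2' : 0 ≤ t - 2 := by linarith
    have htp : 0 ≤ t - p := by linarith
    have ht0 : 0 ≤ t := by linarith
    have : 0 ≤ (2 * θ - 1) * (t - p) * ((1 + t ^ 2) * p ^ 2 + (t - 2) * p + t * (t - 2)) := by
      positivity
    linear_combination this + 2 * (1 + p ^ 2) * ht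
  have hat : (2 * θ - 1) * (p ^ 3 / (1 + p ^ 2)) + (2 * θ - 1) * (t ^ 3 / (1 + t ^ 2)) ≤
      2 * (1 + 2 * θ * p ^ 2) / (1 + p ^ 2) := by
    rw [mul_div_assoc', mul_div_assoc', div_add_div _ _ (by positivity) (by positivity),
      div_le_div_iff₀ (by positivity) (by positivity)]
    linear_combination (1 + p ^ 2) * hkey
  linarith

noncomputable def wsbdf2EnergyCoeff (θ r : ℝ) : ℝ := (2 * θ - 1) * r ^ ((3 : ℝ) / 2) / (1 + r)

theorem wsbdf2EnergyCoeff_sq {θ p : ℝ} (hp : 0 ≤ p) :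
    wsbdf2EnergyCoeff θ (p ^ 2) = (2 * θ - 1) * (p ^ 3 / (1 + p ^ 2)) := by
  rw [wsbdf2EnergyCoeff, ← Real.rpow_natCast p 2, ← Real.rpow_mul hp]
  norm_num
  ring

theorem wsbdf2_kinetic_bound {θ rs r r' : ℝ} (hθ : 1 / 2 < θ) (hθ1 : θ ≤ 1)
    (hroot : (1 - 2 * θ) ^ 2 * rs ^ 3 - 4 * θ ^ 2 * rs ^ 2 - 4 * θ * rs - 1 = 0)
    (hr : 0 ≤ r) (hrrs : r ≤ rs) (hr' : 0 ≤ r') (hr'rs : r' ≤ rs) (X Y : ℝ) :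
    wsbdf2EnergyCoeff θ r' * X ^ 2 + 2 * ((2 * θ - 1) * r ^ 2 / (1 + r)) * (Y * X) ≤
      2 * ((1 + 2 * θ * r) / (1 + r)) * X ^ 2 + wsbdf2EnergyCoeff θ r * r * Y ^ 2 := by
  obtain ⟨p, hp, rfl⟩ : ∃ p, 0 ≤ p ∧ r = p ^ 2 := ⟨√r, Real.sqrt_nonneg r, (Real.sq_sqrt hr).symm⟩
  obtain ⟨q, hq, rfl⟩ : ∃ q, 0 ≤ q ∧ r' = q ^ 2 :=
    ⟨√r', Real.sqrt_nonneg r', (Real.sq_sqrt hr').symm⟩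
  have hrs : 0 ≤ rs := hr'.trans hr'rs
  have hpt : p ≤ √rs := Real.le_sqrt_of_sq_le hrrs
  have hqt : q ≤ √rs := Real.le_sqrt_of_sq_le hr'rs
  have hcoeff :=
    cube_div_add_cube_div_le hθ hθ1 (sqrt_root_of_cubic_root hθ hrs hroot) hp hpt hq hqt
  have hamgm : 2 * ((2 * θ - 1) * p ^ 4) * (Y * X) ≤ (2 * θ - 1) * p ^ 3 * X ^ 2
      + (2 * θ - 1) * p ^ 5 * Y ^ 2 := by
    linear_combination mul_nonneg (mul_nonneg (by linarith : (0 : ℝ) ≤ 2 * θ - 1)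
      (pow_nonneg hp 3)) (sq_nonneg (X - p * Y))
  rw [wsbdf2EnergyCoeff_sq hp, wsbdf2EnergyCoeff_sq hq]
  have hX := mul_le_mul_of_nonneg_right hcoeff (sq_nonneg X)
  have hXY := div_le_div_of_nonneg_right hamgm (by positivity : (0 : ℝ) ≤ 1 + p ^ 2)
  linear_combination hX + hXY

-- `r` is the ratio of the step `τ` to the previous one (`r = 0` at the first step), `r'` the
-- next ratio, and `δ` the previous increment, so `r * (‖δ‖ ^ 2 / τ)` is `‖δ‖ ^ 2` divided by the
-- previous step.
theorem wsbdf2_step_energy_le {H : Type*} [NormedAddCommGroup H] [InnerProductSpace ℝ H]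
    {A : H →L[ℝ] H} (hA : A.IsPositive) {θ rs r r' τ : ℝ} (hθ : 1 / 2 < θ) (hθ1 : θ ≤ 1)
    (hroot : (1 - 2 * θ) ^ 2 * rs ^ 3 - 4 * θ ^ 2 * rs ^ 2 - 4 * θ * rs - 1 = 0)
    (hr : 0 ≤ r) (hrrs : r ≤ rs) (hr' : 0 ≤ r') (hr'rs : r' ≤ rs) (hτ : 0 < τ) {x y δ g : H}
    (hscheme : ((1 + 2 * θ * r) / (τ * (1 + r))) • (x - y) +
      ((1 - 2 * θ) * r ^ 2 / (τ * (1 + r))) • δ + A (θ • x + (1 - θ) • y) = g) :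
    wsbdf2EnergyCoeff θ r' * (‖x - y‖ ^ 2 / τ) + ⟪A x, x⟫ -
        (wsbdf2EnergyCoeff θ r * r * (‖δ‖ ^ 2 / τ) + ⟪A y, y⟫) ≤ 2 * ⟪g, x - y⟫ := by
  simp only [div_mul_eq_div_div_swap] at hscheme
  have htest := congrArg (⟪·, x - y⟫) hscheme
  simp only [inner_add_left, real_inner_smul_left, real_inner_self_eq_norm_sq] at htest
  have hpolar := hA.isSymmetric.two_mul_inner_smul_add_smul_sub θ x y
  have hdiss := mul_nonneg (by linarith : (0 : ℝ) ≤ 2 * θ - 1) (hA.inner_nonneg_left (x - y))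
  have hb1 : (1 - 2 * θ) * r ^ 2 / (1 + r) / τ ≤ 0 :=
    div_nonpos_of_nonpos_of_nonneg (div_nonpos_of_nonpos_of_nonneg
      (mul_nonpos_of_nonpos_of_nonneg (by linarith) (sq_nonneg r)) (by positivity)) hτ.le
  have hcs := mul_le_mul_of_nonpos_left (real_inner_le_norm δ (x - y)) hb1
  have hkin := div_le_div_of_nonneg_right
    (wsbdf2_kinetic_bound hθ hθ1 hroot hr hrrs hr' hr'rs ‖x - y‖ ‖δ‖) hτ.le
  linear_combination hkin + 2 * hcs + hdiss + 2 * htest - hpolar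

theorem wsbdf2_first_step_energy_le {H : Type*} [NormedAddCommGroup H]
    [InnerProductSpace ℝ H] {A : H →L[ℝ] H} (hA : A.IsPositive) {θ rs r' τ : ℝ}
    (hθ : 1 / 2 < θ) (hθ1 : θ ≤ 1)
    (hroot : (1 - 2 * θ) ^ 2 * rs ^ 3 - 4 * θ ^ 2 * rs ^ 2 - 4 * θ * rs - 1 = 0)
    (hr' : 0 ≤ r') (hr'rs : r' ≤ rs) (hτ : 0 < τ) {x y g : H}
    (hscheme : τ⁻¹ • (x - y) + A (θ • x + (1 - θ) • y) = g) :
    wsbdf2EnergyCoeff θ r' * (‖x - y‖ ^ 2 / τ) + ⟪A x, x⟫ - ⟪A y, y⟫ ≤ 2 * ⟪g, x - y⟫ := by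
  have hscheme' : ((1 + 2 * θ * 0) / (τ * (1 + 0))) • (x - y) +
      ((1 - 2 * θ) * 0 ^ 2 / (τ * (1 + 0))) • (0 : H) + A (θ • x + (1 - θ) • y) = g := by
    simpa using hscheme
  simpa using wsbdf2_step_energy_le hA hθ hθ1 hroot le_rfl (hr'.trans hr'rs) hr' hr'rs hτ hscheme'

theorem rr_mul_div {τ : ℕ → ℝ} {k : ℕ} (hτ : τ k ≠ 0) (a : ℝ) :
    rr τ k * (a / τ k) = a / τ (k - 1) := by
  rw [rr, div_mul_div_comm, mul_comm (τ k), mul_div_mul_right _ _ hτ]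

theorem wsbdf2_energy_dissipation_general
    {H : Type*} [NormedAddCommGroup H] [InnerProductSpace ℝ H]
    (A : H →L[ℝ] H)
    (hA_selfadj : ∀ x y : H, ⟪A x, y⟫ = ⟪x, A y⟫)
    (hA_nonneg : ∀ x : H, 0 ≤ ⟪A x, x⟫)
    (θ : ℝ) (hθ : 1 / 2 < θ ∧ θ ≤ 1)
    (N : ℕ)
    (τ : ℕ → ℝ) (hτ : ∀ k, 1 ≤ k → k ≤ N + 1 → 0 < τ k)
    (rs : ℝ)
    (hrs_root : (1 - 2 * θ) ^ 2 * rs ^ 3 - 4 * θ ^ 2 * rs ^ 2 - 4 * θ * rs - 1 = 0)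
    (hr : ∀ k, 2 ≤ k → k ≤ N + 1 → 0 < rr τ k ∧ rr τ k ≤ rs)
    (u f : ℕ → H)
    (hscheme1 : (τ 1)⁻¹ • (u 1 - u 0) + A (θ • u 1 + (1 - θ) • u 0)
      = θ • f 1 + (1 - θ) • f 0)
    (hscheme : ∀ n, 2 ≤ n → n ≤ N →
      bk θ τ n 0 • (u n - u (n - 1)) + bk θ τ n 1 • (u (n - 1) - u (n - 2)) +
        A (θ • u n + (1 - θ) • u (n - 1)) = θ • f n + (1 - θ) • f (n - 1))
    (E : ℕ → ℝ)
    (hE0 : E 0 = ⟪A (u 0), u 0⟫)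
    (hEk : ∀ k, 1 ≤ k → k ≤ N →
      E k = (2 * θ - 1) * (rr τ (k + 1)) ^ ((3 : ℝ) / 2) / (1 + rr τ (k + 1)) * τ k *
          ‖(τ k)⁻¹ • (u k - u (k - 1))‖ ^ 2 + ⟪A (u k), u k⟫) :
    (∀ k, 1 ≤ k → k ≤ N →
      (E k - E (k - 1)) / τ k ≤
        2 * ⟪θ • f k + (1 - θ) • f (k - 1), (τ k)⁻¹ • (u k - u (k - 1))⟫) ∧
    ((∀ k, k ≤ N → f k = 0) → ∀ k, 1 ≤ k → k ≤ N → E k ≤ E (k - 1)) := by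
  have hA : A.IsPositive := A.isPositive_iff.2 ⟨hA_selfadj, hA_nonneg⟩
  have henergy : ∀ k, 1 ≤ k → k ≤ N → E k = wsbdf2EnergyCoeff θ (rr τ (k + 1)) *
      (‖u k - u (k - 1)‖ ^ 2 / τ k) + ⟪A (u k), u k⟫ := fun k hk1 hkN => by
    rw [hEk k hk1 hkN, mul_assoc, mul_norm_inv_smul_sq]
    rfl
  have step : ∀ k, 1 ≤ k → k ≤ N →
      E k - E (k - 1) ≤ 2 * ⟪θ • f k + (1 - θ) • f (k - 1), u k - u (k - 1)⟫ := by
    intro k hk1 hkN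
    have hτk := hτ k hk1 (by omega)
    obtain ⟨hr'0, hr'rs⟩ := hr (k + 1) (by omega) (by omega)
    rw [henergy k hk1 hkN]
    rcases (by omega : k = 1 ∨ 2 ≤ k) with rfl | hk2
    · rw [hE0]
      exact wsbdf2_first_step_energy_le hA hθ.1 hθ.2 hrs_root hr'0.le hr'rs hτk hscheme1
    · obtain ⟨hr0, hrrs⟩ := hr k hk2 (by omega)
      have hscheme_k := hscheme k hk2 hkN
      simp only [bk, if_neg (by omega : k ≠ 1), if_pos, one_ne_zero, if_false] at hscheme_k
      rw [henergy (k - 1) (by omega) (by omega), Nat.sub_add_cancel hk1, Nat.sub_sub,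
        ← rr_mul_div hτk.ne', ← mul_assoc]
      exact wsbdf2_step_energy_le hA hθ.1 hθ.2 hrs_root hr0.le hrrs hr'0.le hr'rs hτk hscheme_k
  refine ⟨fun k hk1 hkN => ?_, fun hf k hk1 hkN => ?_⟩
  · have hτk := hτ k hk1 (by omega)
    rw [real_inner_smul_right, div_le_iff₀ hτk]
    exact (step k hk1 hkN).trans_eq (by field_simp)
  · have := step k hk1 hkN
    simp only [hf k hkN, hf (k - 1) (by omega), smul_zero, add_zero, inner_zero_left,
      mul_zero] at this
    linarith

/-- discrete energy dissipation law for the WSBDF2 scheme. Let `θ ∈ (1/2, 1]`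
with all ratios `r_2, …, r_{N+1}` in `(0, r_s]` (`r_s` the unique positive root of
`(1 − 2θ)² r³ − 4θ² r² − 4θ r − 1 = 0`). With the discrete energies
`E^0 = ⟨A u^0, u^0⟩` and
`E^k = ((2θ − 1) r_{k+1}^{3/2}/(1 + r_{k+1})) τ_k ‖(u^k − u^{k−1})/τ_k‖² + ⟨A u^k, u^k⟩`,
the WSBDF2 solution satisfies
`(E^k − E^{k−1})/τ_k ≤ 2 ⟨θ f^k + (1 − θ) f^{k−1}, (u^k − u^{k−1})/τ_k⟩` for `1 ≤ k ≤ N`;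
in particular, if `f ≡ 0`, then `E^k ≤ E^{k−1}` for all `1 ≤ k ≤ N`. -/
theorem wsbdf2_energy_dissipation
    {H : Type*} [NormedAddCommGroup H] [InnerProductSpace ℝ H] [CompleteSpace H]
    (A : H →L[ℝ] H)
    (hA_selfadj : ∀ x y : H, ⟪A x, y⟫ = ⟪x, A y⟫)
    (hA_nonneg : ∀ x : H, 0 ≤ ⟪A x, x⟫)
    (θ : ℝ) (hθ : 1 / 2 < θ ∧ θ ≤ 1)
    (N : ℕ) (hN : 1 ≤ N)
    (τ : ℕ → ℝ) (hτ : ∀ k, 1 ≤ k → k ≤ N + 1 → 0 < τ k)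
    (rs : ℝ) (hrs_pos : 0 < rs)
    (hrs_root : (1 - 2 * θ) ^ 2 * rs ^ 3 - 4 * θ ^ 2 * rs ^ 2 - 4 * θ * rs - 1 = 0)
    (hrs_uniq : ∀ r : ℝ, 0 < r →
      (1 - 2 * θ) ^ 2 * r ^ 3 - 4 * θ ^ 2 * r ^ 2 - 4 * θ * r - 1 = 0 → r = rs)
    (hr : ∀ k, 2 ≤ k → k ≤ N + 1 → 0 < rr τ k ∧ rr τ k ≤ rs)
    (u f : ℕ → H)
    (hscheme1 : (τ 1)⁻¹ • (u 1 - u 0) + A (θ • u 1 + (1 - θ) • u 0)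
      = θ • f 1 + (1 - θ) • f 0)
    (hscheme : ∀ n, 2 ≤ n → n ≤ N →
      bk θ τ n 0 • (u n - u (n - 1)) + bk θ τ n 1 • (u (n - 1) - u (n - 2)) +
        A (θ • u n + (1 - θ) • u (n - 1)) = θ • f n + (1 - θ) • f (n - 1))
    (E : ℕ → ℝ)
    (hE0 : E 0 = ⟪A (u 0), u 0⟫)
    (hEk : ∀ k, 1 ≤ k → k ≤ N →
      E k = (2 * θ - 1) * (rr τ (k + 1)) ^ ((3 : ℝ) / 2) / (1 + rr τ (k + 1)) * τ k *
          ‖(τ k)⁻¹ • (u k - u (k - 1))‖ ^ 2 + ⟪A (u k), u k⟫) :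
    (∀ k, 1 ≤ k → k ≤ N →
      (E k - E (k - 1)) / τ k ≤
        2 * ⟪θ • f k + (1 - θ) • f (k - 1), (τ k)⁻¹ • (u k - u (k - 1))⟫) ∧
    ((∀ k, k ≤ N → f k = 0) → ∀ k, 1 ≤ k → k ≤ N → E k ≤ E (k - 1)) :=
  wsbdf2_energy_dissipation_general A hA_selfadj hA_nonneg θ hθ N τ hτ rs hrs_root hr u f hscheme1
    hscheme E hE0 hEk
end

section
/- Let u : [0, T] → H be three times continuously differentiable and θ ∈ [1/2, 1], with arbitrary positive steps. Define the consistency errors η^1 := (u(t_1) − u(t_0))/τ_1 − θ u'(t_1) − (1 − θ) u'(t_0) and, for j ≥ 2, η^j := b_0^{(j)}(u(t_j) − u(t_{j−1})) + b_1^{(j)}(u(t_{j−1}) − u(t_{j−2})) − θ u'(t_j) − (1 − θ) u'(t_{j−1}). Then for every n ≥ 1, ∑_{k=1}^n ∑_{j=1}^k d_{k−j}^{(k)} ‖η^j‖ ≤ 2(2 − θ) τ_max² · max_{0 ≤ t ≤ t_1} ‖u''(t)‖ + 3 t_n τ_max² · max_{0 ≤ t ≤ T} ‖u'''(t)‖,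 where τ_max := max_{1 ≤ k ≤ N} τ_k and t_n = τ_1 + ⋯ + τ_n. -/
open Finset

open Set

section Rem
variable {E : Type*} [NormedAddCommGroup E] [NormedSpace ℝ E]

/-- First-order Taylor remainder with a constant bound on the derivative deviation. -/
lemma rem_one {f f' : ℝ → E} {s : Set ℝ} (hs : Convex ℝ s)
    (hf : ∀ x ∈ s, HasDerivWithinAt f (f' x) s x)
    {c x : ℝ} (hc : c ∈ s) (hx : x ∈ s) {K : ℝ}
    (hK : ∀ y ∈ s, ‖f' y - f' c‖ ≤ K) :
    ‖f x - f c - (x - c) • f' c‖ ≤ K * |x - c| := by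
  have hg : ∀ y ∈ s, HasDerivWithinAt (fun z => f z - z • f' c) (f' y - f' c) s y := by
    intro y hy
    exact (hf y hy).sub (by simpa using (hasDerivWithinAt_id y s).smul_const (f' c))
  have h := hs.norm_image_sub_le_of_norm_hasDerivWithin_le hg hK hc hx
  have heq : f x - x • f' c - (f c - c • f' c) = f x - f c - (x - c) • f' c := by
    module
  rw [heq] at h
  simpa [Real.norm_eq_abs] using h

/-- Crude second-order Taylor remainder (both directions). -/
lemma rem_two' {f f' : ℝ → E} {s : Set ℝ} (hs : Convex ℝ s)
    (hf : ∀ x ∈ s, HasDerivWithinAt f (f' x) s x)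
    {p x : ℝ} (hp : p ∈ s) (hx : x ∈ s) {v A : E} {K : ℝ}
    (hb : ∀ y ∈ s, ‖f' y - v - (y - p) • A‖ ≤ K) :
    ‖f x - f p - (x - p) • v - ((x - p) ^ 2 / 2) • A‖ ≤ K * |x - p| := by
  have hg : ∀ y ∈ s, HasDerivWithinAt
      (fun z => f z - z • v - ((z - p) ^ 2 / 2) • A) (f' y - v - (y - p) • A) s y := by
    intro y hy
    have h1 : HasDerivWithinAt (fun z : ℝ => z • v) v s y := by
      simpa using (hasDerivWithinAt_id y s).smul_const v
    have h2 : HasDerivWithinAt (fun z : ℝ => ((z - p) ^ 2 / 2) • A) ((y - p) • A) s y := by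
      have hq : HasDerivWithinAt (fun z : ℝ => (z - p) ^ 2 / 2) (y - p) s y := by
        have := (((hasDerivAt_id y).sub_const p).pow 2).div_const 2
        simpa [mul_comm] using this.hasDerivWithinAt
      simpa using hq.smul_const A
    exact ((hf y hy).sub h1).sub h2
  have h := hs.norm_image_sub_le_of_norm_hasDerivWithin_le hg hb hp hx
  have heq : f x - x • v - ((x - p) ^ 2 / 2) • A - (f p - p • v - ((p - p) ^ 2 / 2) • A) =
      f x - f p - (x - p) • v - ((x - p) ^ 2 / 2) • A := by
    have : ((p - p) ^ 2 / 2) = 0 := by ring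
    rw [this]
    module
  rw [heq] at h
  simpa [Real.norm_eq_abs] using h

/-- Sharp (factor 1/2) second-order Taylor remainder, rightward. -/
lemma rem_two {f f' : ℝ → E} {p q : ℝ} (hpq : p ≤ q)
    (hf : ∀ x ∈ Set.Icc p q, HasDerivWithinAt f (f' x) (Set.Icc p q) x)
    {v A : E} {K : ℝ}
    (hb : ∀ y ∈ Set.Icc p q, ‖f' y - v - (y - p) • A‖ ≤ K * (y - p)) :
    ‖f q - f p - (q - p) • v - ((q - p) ^ 2 / 2) • A‖ ≤ K * (q - p) ^ 2 / 2 := by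
  set g : ℝ → E := fun z => f z - z • v - ((z - p) ^ 2 / 2) • A with hgdef
  have hg : ∀ y ∈ Set.Icc p q, HasDerivWithinAt g (f' y - v - (y - p) • A) (Set.Icc p q) y := by
    intro y hy
    have h1 : HasDerivWithinAt (fun z : ℝ => z • v) v (Set.Icc p q) y := by
      simpa using (hasDerivWithinAt_id y (Set.Icc p q)).smul_const v
    have h2 : HasDerivWithinAt (fun z : ℝ => ((z - p) ^ 2 / 2) • A) ((y - p) • A)
        (Set.Icc p q) y := by
      have hq : HasDerivWithinAt (fun z : ℝ => (z - p) ^ 2 / 2) (y - p) (Set.Icc p q) y := by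
        have := (((hasDerivAt_id y).sub_const p).pow 2).div_const 2
        simpa [mul_comm] using this.hasDerivWithinAt
      simpa using hq.smul_const A
    exact ((hf y hy).sub h1).sub h2
  have hgc : ContinuousOn g (Set.Icc p q) := fun y hy => (hg y hy).continuousWithinAt
  have hcont : ContinuousOn (fun z => g z - g p) (Set.Icc p q) := hgc.sub continuousOn_const
  have hderiv : ∀ x ∈ Set.Ico p q, HasDerivWithinAt (fun z => g z - g p)
      (f' x - v - (x - p) • A) (Set.Ici x) x := by
    intro x hx
    have hxm : x ∈ Set.Icc p q := Set.mem_Icc.mpr ⟨hx.1, hx.2.le⟩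
    have := ((hg x hxm).sub (hasDerivWithinAt_const _ _ (g p))).mono_of_mem_nhdsWithin
      (Icc_mem_nhdsGE_of_mem hx)
    rw [sub_zero] at this
    exact this
  have hB : ∀ x : ℝ, HasDerivAt (fun x => K * (x - p) ^ 2 / 2) (K * (x - p)) x := by
    intro x
    have := ((((hasDerivAt_id x).sub_const p).pow 2).const_mul K).div_const 2
    have h2 : K * (2 * (x - p)) / 2 = K * (x - p) := by ring
    rw [← h2]
    simpa using this
  have key : ∀ x ∈ Set.Icc p q, ‖g x - g p‖ ≤ K * (x - p) ^ 2 / 2 :=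
    image_norm_le_of_norm_deriv_right_le_deriv_boundary hcont hderiv
      (by simp) hB
      (fun x hx => hb x (Set.mem_Icc.mpr ⟨hx.1, hx.2.le⟩))
  have h := key q (Set.right_mem_Icc.mpr hpq)
  have heq : g q - g p = f q - f p - (q - p) • v - ((q - p) ^ 2 / 2) • A := by
    simp only [hgdef]
    have : ((p - p) ^ 2 / 2) = 0 := by ring
    rw [this]
    module
  rwa [heq] at h

/-- Second iterated derivative as twice-iterated `derivWithin`. -/
lemma iter2_eq (f : ℝ → E) {s : Set ℝ} (hs : UniqueDiffOn ℝ s) {x : ℝ} (hx : x ∈ s) :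
    iteratedDerivWithin 2 f s x = derivWithin (derivWithin f s) s x := by
  rw [show (2 : ℕ) = 1 + 1 from rfl, iteratedDerivWithin_succ',
    iteratedDerivWithin_one]

lemma iter3_eq (f : ℝ → E) {s : Set ℝ} (hs : UniqueDiffOn ℝ s) {x : ℝ} (hx : x ∈ s) :
    iteratedDerivWithin 3 f s x = derivWithin (derivWithin (derivWithin f s) s) s x := by
  rw [show (3 : ℕ) = 2 + 1 from rfl, iteratedDerivWithin_succ', iter2_eq _ hs hx]

end Rem

lemma sum_Icc_one_eq_range (f : ℕ → ℝ) (k : ℕ) :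
    ∑ j ∈ Finset.Icc 1 k, f j = ∑ i ∈ Finset.range k, f (i + 1) := by
  induction k with
  | zero => simp
  | succ k ih => rw [Finset.sum_range_succ, ← ih, Finset.sum_Icc_succ_top (by omega)]

lemma sum_Icc_rev_eq_range (f : ℕ → ℝ) (k : ℕ) :
    ∑ j ∈ Finset.Icc 1 k, f (k - j) = ∑ m ∈ Finset.range k, f m := by
  rw [sum_Icc_one_eq_range (fun j => f (k - j)) k]
  rw [show (∑ i ∈ Finset.range k, f (k - (i + 1))) = ∑ i ∈ Finset.range k, f (k - 1 - i) from
    Finset.sum_congr rfl (fun i _ => by congr 1; omega)]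
  exact Finset.sum_range_reflect f k


section Kernel
variable {θ : ℝ} {τ : ℕ → ℝ} {N : ℕ}

lemma bk0_pos (hpos : ∀ k, 1 ≤ k → k ≤ N → 0 < τ k) (hθ1 : 1/2 ≤ θ)
    {n : ℕ} (h1 : 1 ≤ n) (hN : n ≤ N) : 0 < bk θ τ n 0 := by
  rcases Nat.lt_or_ge n 2 with h | h2
  · have hn1 : n = 1 := by omega
    subst hn1
    have h := hpos 1 le_rfl hN
    have hb : bk θ τ 1 0 = 1 / τ 1 := by simp [bk]
    rw [hb]
    positivity
  ·
    have hτn := hpos n h1 hN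
    have hτn1 := hpos (n-1) (by omega) (by omega)
    have hr : 0 < rr τ n := div_pos hτn hτn1
    have hne : n ≠ 1 := by omega
    simp only [bk, if_neg hne, if_pos rfl]
    have h1' : (0:ℝ) < 1 + 2 * θ * rr τ n := by nlinarith
    have h2' : (0:ℝ) < τ n * (1 + rr τ n) := by nlinarith
    exact div_pos h1' h2'

lemma bk1_nonpos (hpos : ∀ k, 1 ≤ k → k ≤ N → 0 < τ k) (hθ1 : 1/2 ≤ θ)
    {n : ℕ} (h2 : 2 ≤ n) (hN : n ≤ N) : bk θ τ n 1 ≤ 0 := by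
  have hτn := hpos n (by omega) hN
  have hτn1 := hpos (n-1) (by omega) (by omega)
  have hr : 0 < rr τ n := div_pos hτn hτn1
  have hne : n ≠ 1 := by omega
  simp only [bk, if_neg hne, if_pos rfl, if_neg one_ne_zero]
  apply div_nonpos_of_nonpos_of_nonneg
  · nlinarith [sq_nonneg (rr τ n)]
  · positivity

lemma bk_ident (hpos : ∀ k, 1 ≤ k → k ≤ N → 0 < τ k)
    {n : ℕ} (h2 : 2 ≤ n) (hN : n ≤ N) :
    bk θ τ n 0 * τ n + bk θ τ n 1 * τ (n-1) = 1 := by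
  have hτn := hpos n (by omega) hN
  have hτn1 := hpos (n-1) (by omega) (by omega)
  have hne : n ≠ 1 := by omega
  simp only [bk, if_neg hne, if_pos rfl, if_neg one_ne_zero, rr, ↓reduceIte, one_ne_zero]
  have h1 : (0:ℝ) < 1 + τ n / τ (n-1) := by positivity
  field_simp
  ring

lemma dk_succ (θ : ℝ) (τ : ℕ → ℝ) (k m : ℕ) :
    dk θ τ k (m+1) = -(bk θ τ (k - m) 1 / bk θ τ (k - m - 1) 0) * dk θ τ k m := rfl

lemma dk_shift (θ : ℝ) (τ : ℕ → ℝ) : ∀ m k : ℕ,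
    dk θ τ k (m+1) = -(bk θ τ k 1 / bk θ τ k 0) * dk θ τ (k-1) m := by
  intro m
  induction m with
  | zero =>
    intro k
    show -(bk θ τ (k - 0) 1 / bk θ τ (k - 0 - 1) 0) * dk θ τ k 0 = _
    simp only [Nat.sub_zero, dk]
    ring
  | succ m ih =>
    intro k
    rw [dk_succ, ih k, dk_succ]
    have e1 : k - 1 - m = k - (m+1) := by omega
    rw [e1]
    ring

lemma dk_one (θ : ℝ) (τ : ℕ → ℝ) : dk θ τ 1 0 = τ 1 := by
  show (1 : ℝ) / bk θ τ 1 0 = τ 1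
  have hb : bk θ τ 1 0 = 1 / τ 1 := by simp [bk]
  rw [hb, one_div_one_div]

lemma dk_sum (hpos : ∀ k, 1 ≤ k → k ≤ N → 0 < τ k) (hθ1 : 1/2 ≤ θ) :
    ∀ n, 1 ≤ n → n ≤ N → ∑ m ∈ Finset.range n, dk θ τ n m = τ n := by
  intro n
  induction n with
  | zero => omega
  | succ k ih =>
    intro _ hN
    rcases Nat.eq_zero_or_pos k with hk | hk
    · subst hk
      simpa using dk_one θ τ
    · rw [Finset.sum_range_succ']
      have hshift : ∀ i : ℕ, dk θ τ (k+1) (i+1) =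
          -(bk θ τ (k+1) 1 / bk θ τ (k+1) 0) * dk θ τ k i := by
        intro i
        have := dk_shift θ τ i (k+1)
        simpa using this
      have hsum : ∑ i ∈ Finset.range k, dk θ τ (k+1) (i+1) =
          -(bk θ τ (k+1) 1 / bk θ τ (k+1) 0) * τ k := by
        rw [Finset.sum_congr rfl (fun i _ => hshift i), ← Finset.mul_sum,
          ih hk (by omega)]
      rw [hsum]
      have hd0 : dk θ τ (k+1) 0 = 1 / bk θ τ (k+1) 0 := rfl
      rw [hd0]
      have hb0 := bk0_pos hpos hθ1 (n := k+1) (by omega) hN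
      have hi := bk_ident (θ := θ) hpos (n := k+1) (by omega) hN
      simp only [Nat.add_sub_cancel] at hi
      have hcomb : -(bk θ τ (k+1) 1 / bk θ τ (k+1) 0) * τ k + 1 / bk θ τ (k+1) 0 =
          (1 - bk θ τ (k+1) 1 * τ k) / bk θ τ (k+1) 0 := by
        field_simp
        ring
      rw [hcomb, div_eq_iff hb0.ne']
      linarith

lemma dk_nonneg (hpos : ∀ k, 1 ≤ k → k ≤ N → 0 < τ k) (hθ1 : 1/2 ≤ θ) :
    ∀ n, 1 ≤ n → n ≤ N → ∀ m, m ≤ n - 1 → 0 ≤ dk θ τ n m := by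
  intro n h1 hN m
  induction m with
  | zero =>
    intro _
    have hb0 := bk0_pos hpos hθ1 h1 hN
    show (0:ℝ) ≤ 1 / bk θ τ n 0
    positivity
  | succ m ih =>
    intro hm
    rw [dk_succ]
    apply mul_nonneg
    · have hb1 := bk1_nonpos hpos hθ1 (n := n - m) (by omega) (by omega)
      have hb0 := bk0_pos hpos hθ1 (n := n - m - 1) (by omega) (by omega)
      have := div_nonpos_of_nonpos_of_nonneg hb1 hb0.le
      linarith
    · exact ih (by omega)

lemma c_le_half_r (hpos : ∀ k, 1 ≤ k → k ≤ N → 0 < τ k) (hθ1 : 1/2 ≤ θ) (hθ2 : θ ≤ 1)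
    {n : ℕ} (h2 : 2 ≤ n) (hN : n ≤ N) :
    -(bk θ τ n 1 / bk θ τ n 0) ≤ rr τ n / 2 := by
  have hτn := hpos n (by omega) hN
  have hτn1 := hpos (n-1) (by omega) (by omega)
  have hr : 0 < rr τ n := div_pos hτn hτn1
  have hne : n ≠ 1 := by omega
  have hnum : (0:ℝ) < 1 + 2 * θ * rr τ n := by nlinarith
  have hD : (0:ℝ) < τ n * (1 + rr τ n) := by nlinarith
  have hb0e : bk θ τ n 0 = (1 + 2 * θ * rr τ n) / (τ n * (1 + rr τ n)) := by
    simp [bk, hne]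
  have hb1e : bk θ τ n 1 = (1 - 2*θ) * (rr τ n)^2 / (τ n * (1 + rr τ n)) := by
    simp [bk, hne]
  have hsimp : bk θ τ n 1 / bk θ τ n 0 =
      (1 - 2*θ) * (rr τ n)^2 / (1 + 2 * θ * rr τ n) := by
    rw [hb1e, hb0e]
    field_simp
  rw [hsimp, ← neg_div, div_le_div_iff₀ hnum two_pos]
  nlinarith [mul_nonneg (sub_nonneg.mpr hθ2) (sq_nonneg (rr τ n)), hr.le]

lemma dk_last (hpos : ∀ k, 1 ≤ k → k ≤ N → 0 < τ k) (hθ1 : 1/2 ≤ θ) (hθ2 : θ ≤ 1) :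
    ∀ n, 1 ≤ n → n ≤ N → dk θ τ n (n-1) ≤ τ n / 2^(n-1) := by
  intro n
  induction n with
  | zero => omega
  | succ k ih =>
    intro _ hN
    rcases Nat.eq_zero_or_pos k with hk | hk
    · subst hk
      simp [dk_one θ τ]
    · have hd : dk θ τ (k+1) k = -(bk θ τ (k+1) 1 / bk θ τ (k+1) 0) * dk θ τ k (k-1) := by
        have h' : k = (k-1)+1 := by omega
        calc dk θ τ (k+1) k = dk θ τ (k+1) ((k-1)+1) := by rw [← h']
          _ = -(bk θ τ (k+1) 1 / bk θ τ (k+1) 0) * dk θ τ ((k+1)-1) (k-1) :=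
            dk_shift θ τ (k-1) (k+1)
          _ = -(bk θ τ (k+1) 1 / bk θ τ (k+1) 0) * dk θ τ k (k-1) := by norm_num
      have hc0 : 0 ≤ -(bk θ τ (k+1) 1 / bk θ τ (k+1) 0) := by
        have hb1 := bk1_nonpos hpos hθ1 (n := k+1) (by omega) hN
        have hb0 := bk0_pos hpos hθ1 (n := k+1) (by omega) hN
        have := div_nonpos_of_nonpos_of_nonneg hb1 hb0.le
        linarith
      have hcr := c_le_half_r hpos hθ1 hθ2 (n := k+1) (by omega) hN
      have hdn := dk_nonneg hpos hθ1 k hk (by omega) (k-1) le_rfl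
      have ih' := ih hk (by omega)
      have hτk := hpos k hk (by omega)
      have hτk1 := hpos (k+1) (by omega) hN
      have hrr : rr τ (k+1) = τ (k+1) / τ k := by simp [rr]
      have hpow : (2:ℝ)^k = 2^(k-1) * 2 := by
        rw [← pow_succ]
        congr 1
        omega
      have step : dk θ τ (k+1) k ≤ (rr τ (k+1) / 2) * (τ k / 2^(k-1)) := by
        rw [hd]
        have hrr2 : 0 ≤ rr τ (k+1) / 2 := by
          rw [hrr]
          positivity
        exact mul_le_mul hcr ih' hdn hrr2
      have heq : (rr τ (k+1) / 2) * (τ k / 2^(k-1)) = τ (k+1) / 2^k := by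
        rw [hrr, hpow]
        field_simp
      rw [heq] at step
      simpa using step

lemma geom_tail_bound {τ : ℕ → ℝ} {C : ℝ} {n : ℕ} (hC : 0 ≤ C)
    (hb : ∀ k, 1 ≤ k → k ≤ n → τ k ≤ C) :
    ∑ k ∈ Finset.Icc 1 n, τ k / 2^(k-1) ≤ 2 * C := by
  have h1 : ∑ k ∈ Finset.Icc 1 n, τ k / 2^(k-1) ≤
      ∑ k ∈ Finset.Icc 1 n, C * (1/2)^(k-1) := by
    apply Finset.sum_le_sum
    intro k hk
    rw [Finset.mem_Icc] at hk
    have h2 : (0:ℝ) < 2^(k-1) := by positivity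
    rw [div_pow, one_pow, mul_one_div]
    gcongr
    exact hb k hk.1 hk.2
  have h2' : ∑ k ∈ Finset.Icc 1 n, C * (1/2:ℝ)^(k-1) = C * ∑ k ∈ Finset.Icc 1 n, (1/2:ℝ)^(k-1) := by
    rw [Finset.mul_sum]
  have h3 : ∑ k ∈ Finset.Icc 1 n, (1/2:ℝ)^(k-1) = ∑ i ∈ Finset.range n, (1/2:ℝ)^i := by
    rw [sum_Icc_one_eq_range (fun j => (1/2:ℝ)^(j-1)) n]
    exact Finset.sum_congr rfl (fun i _ => by norm_num)
  calc ∑ k ∈ Finset.Icc 1 n, τ k / 2^(k-1)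
      ≤ C * ∑ i ∈ Finset.range n, (1/2:ℝ)^i := by rw [← h3, ← h2']; exact h1
    _ ≤ C * 2 := mul_le_mul_of_nonneg_left (sum_geometric_two_le n) hC
    _ = 2 * C := by ring

lemma identB {θ x y : ℝ} (hx : 0 < x) (hy : 0 < y) :
    (1 + 2*θ*(x/y)) / (x * (1 + x/y)) * x^2 -
      (1 - 2*θ) * (x/y)^2 / (x * (1 + x/y)) * y^2 = 2*θ*x := by
  have h1 : (0:ℝ) < 1 + x/y := by positivity
  field_simp
  ring

lemma identE {θ x r : ℝ} (hθ : 1/2 ≤ θ) (hx : 0 < x) (hr : 0 < r) :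
    (1 + 2*θ*r) / (x * (1 + r)) * (x^3/2) ≤ θ * x^2 := by
  have hD : (0:ℝ) < x * (1 + r) := by nlinarith
  rw [div_mul_eq_mul_div, div_le_iff₀ hD]
  nlinarith [mul_nonneg (pow_pos hx 3).le (by linarith : (0:ℝ) ≤ θ - 1/2),
    mul_nonneg (mul_nonneg (pow_pos hx 3).le (by linarith : (0:ℝ) ≤ θ - 1/2)) hr.le]

lemma identR {θ x y : ℝ} (hθ1 : 1/2 ≤ θ) (hx : 0 < x) (hy : 0 < y) :
    -((1 - 2*θ) * (x/y)^2 / (x * (1 + x/y))) * y^3 ≤ (2*θ - 1) * (x * y) := by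
  have h1 : (0:ℝ) < 1 + x/y := by positivity
  have hD : (0:ℝ) < x * (1 + x/y) := by positivity
  have h' : -((1 - 2*θ) * (x/y)^2 / (x * (1 + x/y))) =
      (2*θ-1) * (x/y)^2 / (x * (1 + x/y)) := by
    rw [← neg_div]
    ring_nf
  rw [h', div_mul_eq_mul_div, div_le_iff₀ hD]
  have e1 : (2*θ-1) * (x/y)^2 * y^3 = (2*θ-1) * (x^2 * y) := by
    field_simp
  have e2 : (2*θ-1) * (x * y) * (x * (1 + x/y)) = (2*θ-1) * (x^2 * y + x^3) := by
    field_simp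
  rw [e1, e2]
  nlinarith [mul_nonneg (by linarith : (0:ℝ) ≤ 2*θ-1) (pow_pos hx 3).le]

end Kernel

set_option maxHeartbeats 4000000 in
/-- global consistency error bound (Lemma 4.1). For three times continuously
differentiable `u : [0,T] → H` and `θ ∈ [1/2, 1]`, with consistency errors
`η^1 = (u(t_1) − u(t_0))/τ_1 − θ u'(t_1) − (1 − θ) u'(t_0)` and, for `j ≥ 2`,
`η^j = b_0^{(j)}(u(t_j) − u(t_{j−1})) + b_1^{(j)}(u(t_{j−1}) − u(t_{j−2})) − θ u'(t_j)
       − (1 − θ) u'(t_{j−1})`, one has, for every `1 ≤ n ≤ N`,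
`∑_{k=1}^n ∑_{j=1}^k d_{k−j}^{(k)} ‖η^j‖ ≤ 2(2 − θ) τ_max² max_{[0,t_1]} ‖u''‖
      + 3 t_n τ_max² max_{[0,T]} ‖u'''‖`. -/
theorem wsbdf2_global_consistency
    {H : Type*} [NormedAddCommGroup H] [InnerProductSpace ℝ H] [CompleteSpace H]
    (T : ℝ) (hT : 0 < T)
    (N : ℕ) (hN : 1 ≤ N)
    (t : ℕ → ℝ) (ht0 : t 0 = 0) (htN : t N = T)
    (htmono : ∀ k, 1 ≤ k → k ≤ N → t (k - 1) < t k)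
    (τ : ℕ → ℝ) (hτdef : ∀ k, 1 ≤ k → k ≤ N → τ k = t k - t (k - 1))
    (θ : ℝ) (hθ : 1 / 2 ≤ θ ∧ θ ≤ 1)
    (u : ℝ → H) (hu : ContDiffOn ℝ 3 u (Set.Icc 0 T))
    (η : ℕ → H)
    (hη1 : η 1 = (τ 1)⁻¹ • (u (t 1) - u (t 0)) -
      θ • derivWithin u (Set.Icc 0 T) (t 1) -
      (1 - θ) • derivWithin u (Set.Icc 0 T) (t 0))
    (hηj : ∀ j, 2 ≤ j → j ≤ N →
      η j = bk θ τ j 0 • (u (t j) - u (t (j - 1))) +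
        bk θ τ j 1 • (u (t (j - 1)) - u (t (j - 2))) -
        θ • derivWithin u (Set.Icc 0 T) (t j) -
        (1 - θ) • derivWithin u (Set.Icc 0 T) (t (j - 1))) :
    ∀ n, 1 ≤ n → n ≤ N →
      ∑ k ∈ Finset.Icc 1 n, ∑ j ∈ Finset.Icc 1 k, dk θ τ k (k - j) * ‖η j‖ ≤
        2 * (2 - θ) * ((Finset.Icc 1 N).sup' (Finset.nonempty_Icc.mpr hN) τ) ^ 2 *
            sSup ((fun s => ‖iteratedDerivWithin 2 u (Set.Icc 0 T) s‖) '' Set.Icc 0 (t 1)) +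
          3 * t n * ((Finset.Icc 1 N).sup' (Finset.nonempty_Icc.mpr hN) τ) ^ 2 *
            sSup ((fun s => ‖iteratedDerivWithin 3 u (Set.Icc 0 T) s‖) '' Set.Icc 0 T) := by
  intro n hn1 hnN
  obtain ⟨hθ1, hθ2⟩ := hθ
  -- basic facts
  have hτpos : ∀ k, 1 ≤ k → k ≤ N → 0 < τ k := fun k h1 h2 => by
    rw [hτdef k h1 h2]; linarith [htmono k h1 h2]
  have hmono2 : ∀ j, j ≤ N → ∀ i, i ≤ j → t i ≤ t j := by
    intro j
    induction j with
    | zero =>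
      intro _ i hi
      have : i = 0 := by omega
      rw [this]
    | succ j ihj =>
      intro hjN i hi
      rcases Nat.lt_or_ge i (j+1) with h | h
      · have h1 := ihj (by omega) i (by omega)
        have h2 := htmono (j+1) (by omega) hjN
        simp only [Nat.add_sub_cancel] at h2
        linarith
      · have : i = j + 1 := by omega
        rw [this]
  have htmem : ∀ k, k ≤ N → t k ∈ Set.Icc (0:ℝ) T := by
    intro k hk
    constructor
    · rw [← ht0]; exact hmono2 k hk 0 (Nat.zero_le k)
    · rw [← htN]; exact hmono2 N le_rfl k hk
  have h0t1 : 0 < t 1 := by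
    have := htmono 1 le_rfl hN
    simpa [ht0] using this
  have ht1T : t 1 ≤ T := by rw [← htN]; exact hmono2 N le_rfl 1 hN
  have hsub1 : Set.Icc (0:ℝ) (t 1) ⊆ Set.Icc (0:ℝ) T := Set.Icc_subset_Icc le_rfl ht1T
  set τm := ((Finset.Icc 1 N).sup' (Finset.nonempty_Icc.mpr hN) τ) with hτmdef
  have hτmax : ∀ k, 1 ≤ k → k ≤ N → τ k ≤ τm := fun k h1 h2 =>
    Finset.le_sup' τ (Finset.mem_Icc.mpr ⟨h1, h2⟩)
  have hτmpos : 0 < τm := lt_of_lt_of_le (hτpos 1 le_rfl hN) (hτmax 1 le_rfl hN)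
  set M2 := sSup ((fun s => ‖iteratedDerivWithin 2 u (Set.Icc 0 T) s‖) '' Set.Icc 0 (t 1))
    with hM2def
  set M3 := sSup ((fun s => ‖iteratedDerivWithin 3 u (Set.Icc 0 T) s‖) '' Set.Icc 0 T)
    with hM3def
  have hSud : UniqueDiffOn ℝ (Set.Icc (0:ℝ) T) := uniqueDiffOn_Icc hT
  -- derivative chain
  have hu1 : ∀ x ∈ Set.Icc (0:ℝ) T, HasDerivWithinAt u
      (derivWithin u (Set.Icc 0 T) x) (Set.Icc 0 T) x := fun x hx =>
    ((hu.differentiableOn (by norm_num)) x hx).hasDerivWithinAt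
  have hw1C : ContDiffOn ℝ 2 (derivWithin u (Set.Icc 0 T)) (Set.Icc (0:ℝ) T) :=
    hu.derivWithin hSud (by norm_num)
  have hu2 : ∀ x ∈ Set.Icc (0:ℝ) T, HasDerivWithinAt (derivWithin u (Set.Icc 0 T))
      (derivWithin (derivWithin u (Set.Icc 0 T)) (Set.Icc 0 T) x) (Set.Icc 0 T) x := fun x hx =>
    ((hw1C.differentiableOn (by norm_num)) x hx).hasDerivWithinAt
  have hw2C : ContDiffOn ℝ 1 (derivWithin (derivWithin u (Set.Icc 0 T)) (Set.Icc 0 T))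
      (Set.Icc (0:ℝ) T) := hw1C.derivWithin hSud (by norm_num)
  have hu3 : ∀ x ∈ Set.Icc (0:ℝ) T, HasDerivWithinAt
      (derivWithin (derivWithin u (Set.Icc 0 T)) (Set.Icc 0 T))
      (derivWithin (derivWithin (derivWithin u (Set.Icc 0 T)) (Set.Icc 0 T)) (Set.Icc 0 T) x)
      (Set.Icc 0 T) x := fun x hx =>
    ((hw2C.differentiableOn one_ne_zero) x hx).hasDerivWithinAt
  -- sup bounds
  have hcont2 : ContinuousOn (fun s => ‖iteratedDerivWithin 2 u (Set.Icc 0 T) s‖)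
      (Set.Icc (0:ℝ) T) := (hu.continuousOn_iteratedDerivWithin (by norm_num) hSud).norm
  have hcont3 : ContinuousOn (fun s => ‖iteratedDerivWithin 3 u (Set.Icc 0 T) s‖)
      (Set.Icc (0:ℝ) T) := (hu.continuousOn_iteratedDerivWithin (by norm_num) hSud).norm
  have hM2 : ∀ x ∈ Set.Icc (0:ℝ) (t 1),
      ‖derivWithin (derivWithin u (Set.Icc 0 T)) (Set.Icc 0 T) x‖ ≤ M2 := by
    intro x hx
    rw [← iter2_eq u hSud (hsub1 hx)]
    exact le_csSup (isCompact_Icc.bddAbove_image (hcont2.mono hsub1)) ⟨x, hx, rfl⟩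
  have hM3 : ∀ x ∈ Set.Icc (0:ℝ) T,
      ‖derivWithin (derivWithin (derivWithin u (Set.Icc 0 T)) (Set.Icc 0 T)) (Set.Icc 0 T) x‖
        ≤ M3 := by
    intro x hx
    rw [← iter3_eq u hSud hx]
    exact le_csSup (isCompact_Icc.bddAbove_image hcont3) ⟨x, hx, rfl⟩
  have hM2nn : 0 ≤ M2 := le_trans (norm_nonneg _) (hM2 0 ⟨le_rfl, h0t1.le⟩)
  have hM3nn : 0 ≤ M3 := le_trans (norm_nonneg _) (hM3 0 ⟨le_rfl, hT.le⟩)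
  -- Lipschitz estimates
  have lip2 : ∀ x ∈ Set.Icc (0:ℝ) (t 1), ∀ y ∈ Set.Icc (0:ℝ) (t 1),
      ‖derivWithin u (Set.Icc 0 T) x - derivWithin u (Set.Icc 0 T) y‖ ≤ M2 * |x - y| := by
    intro x hx y hy
    have := (convex_Icc (0:ℝ) (t 1)).norm_image_sub_le_of_norm_hasDerivWithin_le
      (fun z hz => (hu2 z (hsub1 hz)).mono hsub1) (fun z hz => hM2 z hz) hy hx
    simpa [Real.norm_eq_abs] using this
  have lip3 : ∀ x ∈ Set.Icc (0:ℝ) T, ∀ y ∈ Set.Icc (0:ℝ) T,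
      ‖derivWithin (derivWithin u (Set.Icc 0 T)) (Set.Icc 0 T) x -
        derivWithin (derivWithin u (Set.Icc 0 T)) (Set.Icc 0 T) y‖ ≤ M3 * |x - y| := by
    intro x hx y hy
    have := (convex_Icc (0:ℝ) T).norm_image_sub_le_of_norm_hasDerivWithin_le
      hu3 (fun z hz => hM3 z hz) hy hx
    simpa [Real.norm_eq_abs] using this
  -- bound on η 1
  have hτ1 : τ 1 = t 1 := by
    rw [hτdef 1 le_rfl hN]
    norm_num [ht0]
  have hη1b : ‖η 1‖ ≤ θ * M2 * τ 1 := by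
    set y0 := θ • derivWithin u (Set.Icc 0 T) (t 1) +
      (1 - θ) • derivWithin u (Set.Icc 0 T) 0 with hy0def
    have hder : ∀ z ∈ Set.Icc (0:ℝ) (t 1), HasDerivWithinAt (fun s => u s - s • y0)
        (derivWithin u (Set.Icc 0 T) z - y0) (Set.Icc 0 (t 1)) z := by
      intro z hz
      exact ((hu1 z (hsub1 hz)).mono hsub1).sub
        (by simpa using (hasDerivWithinAt_id z (Set.Icc 0 (t 1))).smul_const y0)
    have hbd : ∀ z ∈ Set.Icc (0:ℝ) (t 1),
        ‖derivWithin u (Set.Icc 0 T) z - y0‖ ≤ θ * M2 * t 1 := by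
      intro z hz
      have h1 := lip2 z hz (t 1) ⟨h0t1.le, le_rfl⟩
      have h2 := lip2 z hz 0 ⟨le_rfl, h0t1.le⟩
      have heq : derivWithin u (Set.Icc 0 T) z - y0 =
          θ • (derivWithin u (Set.Icc 0 T) z - derivWithin u (Set.Icc 0 T) (t 1)) +
          (1 - θ) • (derivWithin u (Set.Icc 0 T) z - derivWithin u (Set.Icc 0 T) 0) := by
        rw [hy0def]; module
      rw [heq]
      have habs1 : |z - t 1| = t 1 - z := by rw [abs_of_nonpos (by linarith [hz.2])]; ring
      have habs2 : |z - 0| = z := by rw [sub_zero, abs_of_nonneg hz.1]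
      rw [habs1] at h1
      rw [habs2] at h2
      calc ‖θ • (derivWithin u (Set.Icc 0 T) z - derivWithin u (Set.Icc 0 T) (t 1)) +
          (1 - θ) • (derivWithin u (Set.Icc 0 T) z - derivWithin u (Set.Icc 0 T) 0)‖
          ≤ ‖θ • (derivWithin u (Set.Icc 0 T) z - derivWithin u (Set.Icc 0 T) (t 1))‖ +
            ‖(1 - θ) • (derivWithin u (Set.Icc 0 T) z - derivWithin u (Set.Icc 0 T) 0)‖ :=
            norm_add_le _ _
        _ = θ * ‖derivWithin u (Set.Icc 0 T) z - derivWithin u (Set.Icc 0 T) (t 1)‖ +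
            (1 - θ) * ‖derivWithin u (Set.Icc 0 T) z - derivWithin u (Set.Icc 0 T) 0‖ := by
            rw [norm_smul, norm_smul, Real.norm_eq_abs, Real.norm_eq_abs,
              abs_of_nonneg (by linarith), abs_of_nonneg (by linarith)]
        _ ≤ θ * (M2 * (t 1 - z)) + (1 - θ) * (M2 * z) := by
            have hθ0 : (0:ℝ) ≤ θ := by linarith
            have h1θ0 : (0:ℝ) ≤ 1 - θ := by linarith
            exact add_le_add (mul_le_mul_of_nonneg_left h1 hθ0)
              (mul_le_mul_of_nonneg_left h2 h1θ0)
        _ ≤ θ * M2 * t 1 := by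
            nlinarith [hz.1, hz.2, hM2nn,
              mul_nonneg (mul_nonneg (by linarith : (0:ℝ) ≤ 2*θ-1) hM2nn) hz.1]
    have key := (convex_Icc (0:ℝ) (t 1)).norm_image_sub_le_of_norm_hasDerivWithin_le
      hder hbd ⟨le_rfl, h0t1.le⟩ ⟨h0t1.le, le_rfl⟩
    have hη1eq : η 1 = (τ 1)⁻¹ • ((u (t 1) - (t 1) • y0) - (u 0 - (0:ℝ) • y0)) := by
      rw [hη1, ht0, hy0def, hτ1]
      match_scalars <;> (field_simp; try ring)
    rw [hη1eq, norm_smul, Real.norm_eq_abs, hτ1, abs_of_pos (inv_pos.mpr h0t1)]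
    have hnz : ‖(t 1 : ℝ) - 0‖ = t 1 := by
      rw [Real.norm_eq_abs, sub_zero, abs_of_pos h0t1]
    rw [hnz] at key
    calc (t 1)⁻¹ * ‖(u (t 1) - (t 1) • y0) - (u 0 - (0:ℝ) • y0)‖
        ≤ (t 1)⁻¹ * (θ * M2 * t 1 * t 1) :=
          mul_le_mul_of_nonneg_left key (inv_nonneg.mpr h0t1.le)
      _ = θ * M2 * t 1 := by field_simp
  -- bound on η j for j ≥ 2
  have hηjb : ∀ j, 2 ≤ j → j ≤ N → ‖η j‖ ≤ 3 * τm^2 * M3 := by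
    intro j hj2 hjN
    have hj11 : 1 ≤ j - 1 := by omega
    have hj1N : j - 1 ≤ N := by omega
    have ht2 : j - 1 - 1 = j - 2 := by omega
    have hqm := htmem j hjN
    have hpm := htmem (j-1) hj1N
    have ham := htmem (j-2) (by omega)
    have hg : τ (j-1) = t (j-1) - t (j-2) := by rw [hτdef (j-1) hj11 hj1N, ht2]
    have hh : τ j = t j - t (j-1) := hτdef j (by omega) hjN
    have hgpos := hτpos (j-1) hj11 hj1N
    have hhpos := hτpos j (by omega) hjN
    have hap : t (j-2) ≤ t (j-1) := by linarith
    have hpq : t (j-1) ≤ t j := by linarith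
    have hsubpq : Set.Icc (t (j-1)) (t j) ⊆ Set.Icc (0:ℝ) T := Set.Icc_subset_Icc hpm.1 hqm.2
    have hsubap : Set.Icc (t (j-2)) (t (j-1)) ⊆ Set.Icc (0:ℝ) T := Set.Icc_subset_Icc ham.1 hpm.2
    -- first-order remainder bound for w1 on [p, q]
    have hbE : ∀ y ∈ Set.Icc (t (j-1)) (t j),
        ‖derivWithin u (Set.Icc 0 T) y - derivWithin u (Set.Icc 0 T) (t (j-1)) -
          (y - t (j-1)) • derivWithin (derivWithin u (Set.Icc 0 T)) (Set.Icc 0 T) (t (j-1))‖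
          ≤ (M3 * τ j) * (y - t (j-1)) := by
      intro y hy
      have h := rem_one (convex_Icc (t (j-1)) (t j))
        (fun z hz => (hu2 z (hsubpq hz)).mono hsubpq)
        (Set.left_mem_Icc.mpr hpq) hy (K := M3 * τ j)
        (fun z hz => by
          have h3 := lip3 z (hsubpq hz) (t (j-1)) hpm
          have habs : |z - t (j-1)| ≤ τ j := by
            rw [abs_of_nonneg (by linarith [hz.1])]
            linarith [hz.2]
          calc ‖derivWithin (derivWithin u (Set.Icc 0 T)) (Set.Icc 0 T) z -
              derivWithin (derivWithin u (Set.Icc 0 T)) (Set.Icc 0 T) (t (j-1))‖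
              ≤ M3 * |z - t (j-1)| := h3
            _ ≤ M3 * τ j := mul_le_mul_of_nonneg_left habs hM3nn)
      calc ‖derivWithin u (Set.Icc 0 T) y - derivWithin u (Set.Icc 0 T) (t (j-1)) -
          (y - t (j-1)) • derivWithin (derivWithin u (Set.Icc 0 T)) (Set.Icc 0 T) (t (j-1))‖
          ≤ (M3 * τ j) * |y - t (j-1)| := h
        _ = (M3 * τ j) * (y - t (j-1)) := by
            rw [abs_of_nonneg (by linarith [hy.1])]
    have hE1 := rem_two hpq (fun x hx => (hu1 x (hsubpq hx)).mono hsubpq) hbE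
    -- first-order remainder bound for w1 on [a, p], centered at p
    have hbR : ∀ y ∈ Set.Icc (t (j-2)) (t (j-1)),
        ‖derivWithin u (Set.Icc 0 T) y - derivWithin u (Set.Icc 0 T) (t (j-1)) -
          (y - t (j-1)) • derivWithin (derivWithin u (Set.Icc 0 T)) (Set.Icc 0 T) (t (j-1))‖
          ≤ M3 * τ (j-1) * τ (j-1) := by
      intro y hy
      have h := rem_one (convex_Icc (t (j-2)) (t (j-1)))
        (fun z hz => (hu2 z (hsubap hz)).mono hsubap)
        (Set.right_mem_Icc.mpr hap) hy (K := M3 * τ (j-1))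
        (fun z hz => by
          have h3 := lip3 z (hsubap hz) (t (j-1)) hpm
          have habs : |z - t (j-1)| ≤ τ (j-1) := by
            rw [abs_of_nonpos (by linarith [hz.2])]
            linarith [hz.1]
          calc ‖derivWithin (derivWithin u (Set.Icc 0 T)) (Set.Icc 0 T) z -
              derivWithin (derivWithin u (Set.Icc 0 T)) (Set.Icc 0 T) (t (j-1))‖
              ≤ M3 * |z - t (j-1)| := h3
            _ ≤ M3 * τ (j-1) := mul_le_mul_of_nonneg_left habs hM3nn)
      have habs' : |y - t (j-1)| ≤ τ (j-1) := by
        rw [abs_of_nonpos (by linarith [hy.2])]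
        linarith [hy.1]
      calc ‖derivWithin u (Set.Icc 0 T) y - derivWithin u (Set.Icc 0 T) (t (j-1)) -
          (y - t (j-1)) • derivWithin (derivWithin u (Set.Icc 0 T)) (Set.Icc 0 T) (t (j-1))‖
          ≤ (M3 * τ (j-1)) * |y - t (j-1)| := h
        _ ≤ M3 * τ (j-1) * τ (j-1) := mul_le_mul_of_nonneg_left habs' (by positivity)
    have hR := rem_two' (convex_Icc (t (j-2)) (t (j-1)))
      (fun x hx => (hu1 x (hsubap hx)).mono hsubap)
      (Set.right_mem_Icc.mpr hap) (Set.left_mem_Icc.mpr hap) hbR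
    have hF := rem_one (convex_Icc (t (j-1)) (t j))
      (fun z hz => (hu2 z (hsubpq hz)).mono hsubpq)
      (Set.left_mem_Icc.mpr hpq) (Set.right_mem_Icc.mpr hpq) (K := M3 * τ j)
      (fun z hz => by
        have h3 := lip3 z (hsubpq hz) (t (j-1)) hpm
        have habs : |z - t (j-1)| ≤ τ j := by
          rw [abs_of_nonneg (by linarith [hz.1])]
          linarith [hz.2]
        calc ‖derivWithin (derivWithin u (Set.Icc 0 T)) (Set.Icc 0 T) z -
            derivWithin (derivWithin u (Set.Icc 0 T)) (Set.Icc 0 T) (t (j-1))‖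
            ≤ M3 * |z - t (j-1)| := h3
          _ ≤ M3 * τ j := mul_le_mul_of_nonneg_left habs hM3nn)
    -- kernel identities and bounds
    have hjne : j ≠ 1 := by omega
    have hb0e : bk θ τ j 0 = (1 + 2*θ*rr τ j) / (τ j * (1 + rr τ j)) := by simp [bk, hjne]
    have hb1e : bk θ τ j 1 = (1 - 2*θ) * (rr τ j)^2 / (τ j * (1 + rr τ j)) := by simp [bk, hjne]
    have hrre : rr τ j = τ j / τ (j-1) := rfl
    have hrpos : 0 < rr τ j := by rw [hrre]; positivity
    have hDpos : 0 < τ j * (1 + rr τ j) := by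
      have h1r : (0:ℝ) < 1 + rr τ j := by linarith
      exact mul_pos hhpos h1r
    have hidA : bk θ τ j 0 * τ j + bk θ τ j 1 * τ (j-1) = 1 := bk_ident (θ := θ) hτpos hj2 hjN
    have hidB : bk θ τ j 0 * (τ j)^2 - bk θ τ j 1 * (τ (j-1))^2 = 2*θ*τ j := by
      rw [hb0e, hb1e, hrre]
      exact identB hhpos hgpos
    have hb0pos := bk0_pos (θ := θ) hτpos hθ1 (by omega) hjN
    have hb1np := bk1_nonpos (θ := θ) hτpos hθ1 hj2 hjN
    have hbndE : bk θ τ j 0 * ((τ j)^3/2) ≤ θ * (τ j)^2 := by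
      rw [hb0e]
      exact identE hθ1 hhpos hrpos
    have hbndR : -(bk θ τ j 1) * (τ (j-1))^3 ≤ (2*θ - 1) * (τ j * τ (j-1)) := by
      rw [hb1e, hrre]
      exact identR hθ1 hhpos hgpos
    -- decomposition of η j
    have hidA' : bk θ τ j 0 * (t j - t (j-1)) + bk θ τ j 1 * (t (j-1) - t (j-2)) = 1 := by
      rw [← hh, ← hg]; exact hidA
    have hidB' : bk θ τ j 0 * (t j - t (j-1))^2 - bk θ τ j 1 * (t (j-1) - t (j-2))^2 =
        2*θ*(t j - t (j-1)) := by
      rw [← hh, ← hg]; exact hidB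
    rw [hηj j hj2 hjN]
    have hdec : bk θ τ j 0 • (u (t j) - u (t (j-1))) +
        bk θ τ j 1 • (u (t (j-1)) - u (t (j-2))) -
        θ • derivWithin u (Set.Icc 0 T) (t j) -
        (1 - θ) • derivWithin u (Set.Icc 0 T) (t (j-1)) =
        bk θ τ j 0 • (u (t j) - u (t (j-1)) -
            (t j - t (j-1)) • derivWithin u (Set.Icc 0 T) (t (j-1)) -
            ((t j - t (j-1))^2/2) •
              derivWithin (derivWithin u (Set.Icc 0 T)) (Set.Icc 0 T) (t (j-1))) -
        bk θ τ j 1 • (u (t (j-2)) - u (t (j-1)) -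
            (t (j-2) - t (j-1)) • derivWithin u (Set.Icc 0 T) (t (j-1)) -
            ((t (j-2) - t (j-1))^2/2) •
              derivWithin (derivWithin u (Set.Icc 0 T)) (Set.Icc 0 T) (t (j-1))) -
        θ • (derivWithin u (Set.Icc 0 T) (t j) - derivWithin u (Set.Icc 0 T) (t (j-1)) -
            (t j - t (j-1)) •
              derivWithin (derivWithin u (Set.Icc 0 T)) (Set.Icc 0 T) (t (j-1))) := by
      match_scalars
      all_goals try ring
      · linear_combination hidA'
      · linear_combination hidB'/2
    rw [hdec]
    -- norm estimates
    have hθ0 : (0:ℝ) ≤ θ := by linarith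
    have hE1' : ‖u (t j) - u (t (j-1)) -
        (t j - t (j-1)) • derivWithin u (Set.Icc 0 T) (t (j-1)) -
        ((t j - t (j-1))^2/2) •
          derivWithin (derivWithin u (Set.Icc 0 T)) (Set.Icc 0 T) (t (j-1))‖
        ≤ M3 * (τ j)^3/2 := by
      calc _ ≤ (M3 * τ j) * (t j - t (j-1))^2 / 2 := hE1
        _ = M3 * (τ j)^3/2 := by rw [← hh]; ring
    have hR' : ‖u (t (j-2)) - u (t (j-1)) -
        (t (j-2) - t (j-1)) • derivWithin u (Set.Icc 0 T) (t (j-1)) -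
        ((t (j-2) - t (j-1))^2/2) •
          derivWithin (derivWithin u (Set.Icc 0 T)) (Set.Icc 0 T) (t (j-1))‖
        ≤ M3 * (τ (j-1))^3 := by
      have habs : |t (j-2) - t (j-1)| = τ (j-1) := by
        rw [abs_of_nonpos (by linarith)]
        linarith
      calc _ ≤ M3 * τ (j-1) * τ (j-1) * |t (j-2) - t (j-1)| := hR
        _ = M3 * (τ (j-1))^3 := by rw [habs]; ring
    have hF' : ‖derivWithin u (Set.Icc 0 T) (t j) - derivWithin u (Set.Icc 0 T) (t (j-1)) -
        (t j - t (j-1)) •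
          derivWithin (derivWithin u (Set.Icc 0 T)) (Set.Icc 0 T) (t (j-1))‖
        ≤ M3 * (τ j)^2 := by
      have habs : |t j - t (j-1)| = τ j := by
        rw [abs_of_nonneg (by linarith)]
        linarith
      calc _ ≤ M3 * τ j * |t j - t (j-1)| := hF
        _ = M3 * (τ j)^2 := by rw [habs]; ring
    set E1v := u (t j) - u (t (j-1)) -
        (t j - t (j-1)) • derivWithin u (Set.Icc 0 T) (t (j-1)) -
        ((t j - t (j-1))^2/2) •
          derivWithin (derivWithin u (Set.Icc 0 T)) (Set.Icc 0 T) (t (j-1)) with hE1vdef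
    set Rv := u (t (j-2)) - u (t (j-1)) -
        (t (j-2) - t (j-1)) • derivWithin u (Set.Icc 0 T) (t (j-1)) -
        ((t (j-2) - t (j-1))^2/2) •
          derivWithin (derivWithin u (Set.Icc 0 T)) (Set.Icc 0 T) (t (j-1)) with hRvdef
    set Fv := derivWithin u (Set.Icc 0 T) (t j) - derivWithin u (Set.Icc 0 T) (t (j-1)) -
        (t j - t (j-1)) •
          derivWithin (derivWithin u (Set.Icc 0 T)) (Set.Icc 0 T) (t (j-1)) with hFvdef
    have step1 : ‖bk θ τ j 0 • E1v - bk θ τ j 1 • Rv - θ • Fv‖ ≤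
        bk θ τ j 0 * ‖E1v‖ + (-(bk θ τ j 1)) * ‖Rv‖ + θ * ‖Fv‖ := by
      calc ‖bk θ τ j 0 • E1v - bk θ τ j 1 • Rv - θ • Fv‖
          ≤ ‖bk θ τ j 0 • E1v - bk θ τ j 1 • Rv‖ + ‖θ • Fv‖ := norm_sub_le _ _
        _ ≤ ‖bk θ τ j 0 • E1v‖ + ‖bk θ τ j 1 • Rv‖ + ‖θ • Fv‖ := by
            linarith [norm_sub_le (bk θ τ j 0 • E1v) (bk θ τ j 1 • Rv)]
        _ = bk θ τ j 0 * ‖E1v‖ + (-(bk θ τ j 1)) * ‖Rv‖ + θ * ‖Fv‖ := by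
            rw [norm_smul, norm_smul, norm_smul, Real.norm_eq_abs, Real.norm_eq_abs,
              Real.norm_eq_abs, abs_of_pos hb0pos, abs_of_nonpos hb1np, abs_of_nonneg hθ0]
    have s1 : bk θ τ j 0 * ‖E1v‖ ≤ M3 * (θ * (τ j)^2) := by
      calc bk θ τ j 0 * ‖E1v‖ ≤ bk θ τ j 0 * (M3 * (τ j)^3/2) :=
          mul_le_mul_of_nonneg_left hE1' hb0pos.le
        _ = M3 * (bk θ τ j 0 * ((τ j)^3/2)) := by ring
        _ ≤ M3 * (θ * (τ j)^2) := mul_le_mul_of_nonneg_left hbndE hM3nn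
    have s2 : (-(bk θ τ j 1)) * ‖Rv‖ ≤ M3 * ((2*θ-1) * (τ j * τ (j-1))) := by
      calc (-(bk θ τ j 1)) * ‖Rv‖ ≤ (-(bk θ τ j 1)) * (M3 * (τ (j-1))^3) :=
          mul_le_mul_of_nonneg_left hR' (by linarith)
        _ = M3 * ((-(bk θ τ j 1)) * (τ (j-1))^3) := by ring
        _ ≤ M3 * ((2*θ-1) * (τ j * τ (j-1))) := mul_le_mul_of_nonneg_left hbndR hM3nn
    have s3 : θ * ‖Fv‖ ≤ M3 * (θ * (τ j)^2) := by
      calc θ * ‖Fv‖ ≤ θ * (M3 * (τ j)^2) := mul_le_mul_of_nonneg_left hF' hθ0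
        _ = M3 * (θ * (τ j)^2) := by ring
    have hx := hτmax j (by omega) hjN
    have hy := hτmax (j-1) hj11 hj1N
    have hx2 : (τ j)^2 ≤ τm^2 := pow_le_pow_left₀ hhpos.le hx 2
    have hxy : τ j * τ (j-1) ≤ τm^2 := by
      calc τ j * τ (j-1) ≤ τm * τm := mul_le_mul hx hy hgpos.le hτmpos.le
        _ = τm^2 := (pow_two τm).symm
    have t1b : M3 * (θ * (τ j)^2) ≤ M3 * τm^2 := by
      apply mul_le_mul_of_nonneg_left _ hM3nn
      have h := mul_le_mul_of_nonneg_right hθ2 (sq_nonneg (τ j))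
      linarith
    have t2b : M3 * ((2*θ-1) * (τ j * τ (j-1))) ≤ M3 * τm^2 := by
      apply mul_le_mul_of_nonneg_left _ hM3nn
      have h := mul_le_mul_of_nonneg_right (by linarith : 2*θ-1 ≤ (1:ℝ))
        (mul_pos hhpos hgpos).le
      linarith
    calc ‖bk θ τ j 0 • E1v - bk θ τ j 1 • Rv - θ • Fv‖
        ≤ bk θ τ j 0 * ‖E1v‖ + (-(bk θ τ j 1)) * ‖Rv‖ + θ * ‖Fv‖ := step1
      _ ≤ M3 * (θ * (τ j)^2) + M3 * ((2*θ-1) * (τ j * τ (j-1))) + M3 * (θ * (τ j)^2) := by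
          linarith
      _ ≤ 3 * τm^2 * M3 := by linarith
  -- sums and final assembly
  have hsum' : ∀ k, 1 ≤ k → k ≤ n → ∑ j ∈ Finset.Icc 1 k, dk θ τ k (k - j) = τ k := by
    intro k h1 h2
    rw [sum_Icc_rev_eq_range]
    exact dk_sum hτpos hθ1 k h1 (le_trans h2 hnN)
  have htele : ∑ k ∈ Finset.Icc 1 n, τ k = t n := by
    have h1 : ∑ k ∈ Finset.Icc 1 n, τ k = ∑ k ∈ Finset.Icc 1 n, (t k - t (k-1)) :=
      Finset.sum_congr rfl (fun k hk => by
        rw [Finset.mem_Icc] at hk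
        exact hτdef k hk.1 (le_trans hk.2 hnN))
    rw [h1]
    rw [sum_Icc_one_eq_range (fun k => t k - t (k-1)) n]
    simp only [Nat.add_sub_cancel]
    rw [Finset.sum_range_sub (fun i => t i), ht0, sub_zero]
  have perk : ∀ k ∈ Finset.Icc 1 n, ∑ j ∈ Finset.Icc 1 k, dk θ τ k (k - j) * ‖η j‖ ≤
      dk θ τ k (k-1) * ‖η 1‖ + 3 * τm^2 * M3 * τ k := by
    intro k hk
    rw [Finset.mem_Icc] at hk
    have hkN : k ≤ N := le_trans hk.2 hnN
    have hsplit : Finset.Icc 1 k = insert 1 (Finset.Icc 2 k) := by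
      ext x
      simp only [Finset.mem_Icc, Finset.mem_insert]
      omega
    rw [hsplit, Finset.sum_insert (by simp [Finset.mem_Icc])]
    have hinner : ∑ j ∈ Finset.Icc 2 k, dk θ τ k (k - j) * ‖η j‖ ≤ 3 * τm^2 * M3 * τ k := by
      have hcnn : (0:ℝ) ≤ 3 * τm^2 * M3 := by positivity
      calc ∑ j ∈ Finset.Icc 2 k, dk θ τ k (k - j) * ‖η j‖
          ≤ ∑ j ∈ Finset.Icc 2 k, dk θ τ k (k - j) * (3 * τm^2 * M3) := by
            apply Finset.sum_le_sum
            intro j hj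
            rw [Finset.mem_Icc] at hj
            exact mul_le_mul_of_nonneg_left (hηjb j hj.1 (le_trans hj.2 hkN))
              (dk_nonneg hτpos hθ1 k hk.1 hkN (k - j) (by omega))
        _ = (∑ j ∈ Finset.Icc 2 k, dk θ τ k (k - j)) * (3 * τm^2 * M3) :=
            (Finset.sum_mul _ _ _).symm
        _ ≤ (∑ j ∈ Finset.Icc 1 k, dk θ τ k (k - j)) * (3 * τm^2 * M3) := by
            apply mul_le_mul_of_nonneg_right _ hcnn
            apply Finset.sum_le_sum_of_subset_of_nonneg
            · intro x
              simp only [Finset.mem_Icc]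
              omega
            · intro i hi _
              rw [Finset.mem_Icc] at hi
              exact dk_nonneg hτpos hθ1 k hk.1 hkN (k - i) (by omega)
        _ = τ k * (3 * τm^2 * M3) := by rw [hsum' k hk.1 hk.2]
        _ = 3 * τm^2 * M3 * τ k := by ring
    have hd1 : (k : ℕ) - 1 = k - 1 := rfl
    linarith
  have hgeo : ∑ k ∈ Finset.Icc 1 n, dk θ τ k (k-1) ≤ 2 * τm := by
    calc ∑ k ∈ Finset.Icc 1 n, dk θ τ k (k-1)
        ≤ ∑ k ∈ Finset.Icc 1 n, τ k / 2^(k-1) := by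
          apply Finset.sum_le_sum
          intro k hk
          rw [Finset.mem_Icc] at hk
          exact dk_last hτpos hθ1 hθ2 k hk.1 (le_trans hk.2 hnN)
      _ ≤ 2 * τm := geom_tail_bound hτmpos.le
          (fun k h1 h2 => hτmax k h1 (le_trans h2 hnN))
  calc ∑ k ∈ Finset.Icc 1 n, ∑ j ∈ Finset.Icc 1 k, dk θ τ k (k - j) * ‖η j‖
      ≤ ∑ k ∈ Finset.Icc 1 n, (dk θ τ k (k-1) * ‖η 1‖ + 3 * τm^2 * M3 * τ k) :=
        Finset.sum_le_sum perk
    _ = (∑ k ∈ Finset.Icc 1 n, dk θ τ k (k-1)) * ‖η 1‖ +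
        3 * τm^2 * M3 * (∑ k ∈ Finset.Icc 1 n, τ k) := by
        rw [Finset.sum_add_distrib, ← Finset.sum_mul, ← Finset.mul_sum]
    _ ≤ (2 * τm) * ‖η 1‖ + 3 * τm^2 * M3 * t n := by
        have h1 := mul_le_mul_of_nonneg_right hgeo (norm_nonneg (η 1))
        rw [htele]
        linarith
    _ ≤ 2 * (2 - θ) * τm^2 * M2 + 3 * t n * τm^2 * M3 := by
        have h2 : (2 * τm) * ‖η 1‖ ≤ 2 * (2 - θ) * τm^2 * M2 := by
          have hτ1m := hτmax 1 le_rfl hN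
          have hτ1p := hτpos 1 le_rfl hN
          have hstep : (2 * τm) * ‖η 1‖ ≤ (2 * τm) * (θ * M2 * τ 1) :=
            mul_le_mul_of_nonneg_left hη1b (by positivity)
          have hfin : (2 * τm) * (θ * M2 * τ 1) ≤ 2 * (2 - θ) * τm^2 * M2 := by
            nlinarith [mul_nonneg (mul_nonneg (mul_nonneg (by linarith : (0:ℝ) ≤ θ) hM2nn)
                hτmpos.le) (sub_nonneg.mpr hτ1m),
              mul_nonneg (mul_nonneg (by linarith : (0:ℝ) ≤ 2 - 2*θ) hM2nn) (sq_nonneg τm)]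
          linarith
        linarith [h2]
end
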